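/- arXiv:2603.25320 — 7 statements merged into one kernel-verified Lean document; each statement's English description precedes it below -/
import Mathlib

section
/- Let h : [0,∞) → ℝ be differentiable with derivative h', and suppose h' is absolutely continuous in the sense that there is a locally integrable function g : [0,∞) → ℝ with h'(y) = h'(α) + ∫_α^y g(K) dK for all y ≥ 0, where α ≥ 0 is a fixed anchor. Then for every x ≥ 0 one has the Carr–Madan spanning identity h(x) = h(α) + h'(α)(x − α) + ∫_0^α g(K)·(K − x)⁺ dK + ∫_α^∞ g(K)·(x − K)⁺ dK, where both integrals converge absolutely (the integrand of the second integral vanishes for K > max(x, α)). -/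
/-!
Integrating `h' = h' α + ∫_α^· g` from `α` to `x` gives Taylor's formula
`h x = h α + h' α (x - α) + ∫_α^x (x - K) g K dK`, the double integral being collapsed by
integration by parts against the absolutely continuous primitive of `g`. The oriented integral
over `α..x` is the integral over `Ioc α x` minus the one over `Ioc x α`; on the first the
integrand is `g K (x - K)⁺`, on the second minus `g K (K - x)⁺`, and these payoffs vanish on the
rest of `Ioi α` resp. `Ioc 0 α`.
-/

open MeasureTheory Set

theorem integral_integral_eq_integral_sub_mul {g : ℝ → ℝ} {a b : ℝ}
    (hg : IntervalIntegrable g volume a b) :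
    ∫ y in a..b, (∫ K in a..y, g K) = ∫ K in a..b, (b - K) * g K := by
  have hG := hg.absolutelyContinuousOnInterval_intervalIntegral left_mem_uIcc
  have hlin : AbsolutelyContinuousOnInterval (fun y => y - b) a b :=
    ContDiffOn.absolutelyContinuousOnInterval (by fun_prop)
  have hderivG : ∫ y in a..b, (y - b) * deriv (fun y => ∫ K in a..y, g K) y
      = ∫ y in a..b, (y - b) * g y := by
    refine intervalIntegral.integral_congr_ae ?_
    filter_upwards [hg.ae_hasDerivAt_integral] with y hy hyab
    rw [(hy (uIoc_subset_uIcc hyab) a left_mem_uIcc).deriv]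
  have hparts := hlin.integral_mul_deriv_eq_deriv_mul hG
  simp only [hderivG, sub_self, zero_mul, intervalIntegral.integral_same, mul_zero,
    deriv_sub_const, deriv_id'', one_mul] at hparts
  have hflip : ∫ K in a..b, (b - K) * g K = -∫ y in a..b, (y - b) * g y := by
    rw [← intervalIntegral.integral_neg]
    simp only [← neg_mul, neg_sub]
  linarith

theorem taylor_integral_remainder_of_eq_primitive {h h' g : ℝ → ℝ} {a b : ℝ}
    (hcont : ContinuousOn h (uIcc a b))
    (hderiv : ∀ y ∈ Ioo (min a b) (max a b), HasDerivAt h (h' y) y)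
    (hg : IntervalIntegrable g volume a b)
    (hprim : ∀ y ∈ uIcc a b, h' y = h' a + ∫ K in a..y, g K) :
    h b = h a + h' a * (b - a) + ∫ K in a..b, (b - K) * g K := by
  have hG : ContinuousOn (fun y => ∫ K in a..y, g K) (uIcc a b) :=
    intervalIntegral.continuousOn_primitive_interval' hg left_mem_uIcc
  have hh' : EqOn h' (fun y => h' a + ∫ K in a..y, g K) (uIcc a b) := hprim
  have hftc : ∫ y in a..b, h' y = h b - h a :=
    intervalIntegral.integral_eq_sub_of_hasDeriv_right hcont
      (fun y hy => (hderiv y hy).hasDerivWithinAt)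
      ((continuousOn_const.add hG).congr hh').intervalIntegrable
  rw [intervalIntegral.integral_congr hh', intervalIntegral.integral_add intervalIntegrable_const
    hG.intervalIntegrable, intervalIntegral.integral_const, smul_eq_mul,
    integral_integral_eq_integral_sub_mul hg] at hftc
  linarith

theorem integrableOn_and_setIntegral_eq_of_eqOn_of_sdiff_eq_zero {X E : Type*}
    [MeasurableSpace X] [NormedAddCommGroup E] [NormedSpace ℝ E] {μ : Measure X}
    {f f' : X → E} {s t : Set X} (hs : MeasurableSet s) (ht : MeasurableSet t) (hst : s ⊆ t)
    (heq : EqOn f f' s) (hzero : ∀ K ∈ t \ s, f K = 0) (hf' : IntegrableOn f' s μ) :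
    IntegrableOn f t μ ∧ ∫ K in t, f K ∂μ = ∫ K in s, f' K ∂μ :=
  ⟨((integrableOn_congr_fun heq hs).2 hf').of_forall_sdiff_eq_zero ht hzero,
    (setIntegral_eq_of_subset_of_forall_sdiff_eq_zero ht hst hzero).trans
      (setIntegral_congr_fun hs heq)⟩

theorem integrableOn_and_setIntegral_put_payoff {g : ℝ → ℝ} {c a x : ℝ} (hcx : c ≤ x)
    (hg : IntegrableOn (fun K => (x - K) * g K) (Ioc x a)) :
    IntegrableOn (fun K => g K * max (K - x) 0) (Ioc c a) ∧
    ∫ K in Ioc c a, g K * max (K - x) 0 = -∫ K in Ioc x a, (x - K) * g K := by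
  rw [← integral_neg]
  refine integrableOn_and_setIntegral_eq_of_eqOn_of_sdiff_eq_zero measurableSet_Ioc
    measurableSet_Ioc (Ioc_subset_Ioc_left hcx) (fun K hK => ?_) (fun K hK => ?_) hg.neg
  · rw [max_eq_left (by linarith [hK.1])]
    ring
  · have hKx : K ≤ x := by by_contra hxK; exact hK.2 ⟨not_le.mp hxK, hK.1.2⟩
    simp [max_eq_right (by linarith : K - x ≤ 0)]

theorem integrableOn_and_setIntegral_call_payoff {g : ℝ → ℝ} {a x : ℝ}
    (hg : IntegrableOn (fun K => (x - K) * g K) (Ioc a x)) :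
    IntegrableOn (fun K => g K * max (x - K) 0) (Ioi a) ∧
    ∫ K in Ioi a, g K * max (x - K) 0 = ∫ K in Ioc a x, (x - K) * g K := by
  refine integrableOn_and_setIntegral_eq_of_eqOn_of_sdiff_eq_zero measurableSet_Ioc
    measurableSet_Ioi Ioc_subset_Ioi_self (fun K hK => ?_) (fun K hK => ?_) hg
  · rw [max_eq_left (by linarith [hK.2])]
    ring
  · have hxK : x < K := by by_contra hKx; exact hK.2 ⟨hK.1, not_lt.mp hKx⟩
    simp [max_eq_right (by linarith : x - K ≤ 0)]

theorem integral_sub_mul_eq_put_add_call {g : ℝ → ℝ} {c a x : ℝ} (hcx : c ≤ x)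
    (hg : IntervalIntegrable g volume a x) :
    IntegrableOn (fun K => g K * max (K - x) 0) (Ioc c a) ∧
    IntegrableOn (fun K => g K * max (x - K) 0) (Ioi a) ∧
    ∫ K in a..x, (x - K) * g K
      = (∫ K in Ioc c a, g K * max (K - x) 0) + ∫ K in Ioi a, g K * max (x - K) 0 := by
  obtain ⟨hcall, hput⟩ : IntervalIntegrable (fun K => (x - K) * g K) volume a x :=
    hg.continuousOn_mul (by fun_prop)
  obtain ⟨hput_int, hput_eq⟩ := integrableOn_and_setIntegral_put_payoff hcx hput
  obtain ⟨hcall_int, hcall_eq⟩ := integrableOn_and_setIntegral_call_payoff hcall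
  refine ⟨hput_int, hcall_int, ?_⟩
  rw [intervalIntegral, hput_eq, hcall_eq]
  ring

/-- **One-dimensional Carr–Madan spanning identity.**
If `h` is differentiable on `[0,∞)` with derivative `h'`, and `h'` is absolutely
continuous in the sense that `h' y = h' α + ∫_α^y g(K) dK` for a locally integrable
`g`, then for every `x ≥ 0`,
`h x = h α + h' α (x − α) + ∫_0^α g(K)(K−x)⁺ dK + ∫_α^∞ g(K)(x−K)⁺ dK`,
both integrals converging absolutely. -/
theorem carr_madan_spanning_one_dim
    (h h' g : ℝ → ℝ) (α : ℝ) (hα : 0 ≤ α)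
    (hderiv : ∀ y ∈ Ici (0 : ℝ), HasDerivWithinAt h (h' y) (Ici 0) y)
    (hg : LocallyIntegrableOn g (Ici 0))
    (hac : ∀ y ∈ Ici (0 : ℝ), h' y = h' α + ∫ K in α..y, g K)
    (x : ℝ) (hx : 0 ≤ x) :
    IntegrableOn (fun K => g K * max (K - x) 0) (Ioc 0 α) ∧
    IntegrableOn (fun K => g K * max (x - K) 0) (Ioi α) ∧
    h x = h α + h' α * (x - α)
        + (∫ K in Ioc 0 α, g K * max (K - x) 0)
        + ∫ K in Ioi α, g K * max (x - K) 0 := by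
  have hsub : uIcc α x ⊆ Ici 0 := fun y hy => (le_min hα hx).trans hy.1
  have hgI : IntervalIntegrable g volume α x :=
    (hg.integrableOn_compact_subset hsub isCompact_uIcc).intervalIntegrable
  obtain ⟨hput, hcall, hspan⟩ := integral_sub_mul_eq_put_add_call hx hgI
  refine ⟨hput, hcall, ?_⟩
  rw [add_assoc _ (∫ K in Ioc 0 α, _), ← hspan]
  refine taylor_integral_remainder_of_eq_primitive
    (fun y hy => ((hderiv y (hsub hy)).continuousWithinAt).mono hsub) (fun y hy => ?_) hgI
    (fun y hy => hac y (hsub hy))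
  have hy0 : 0 < y := (le_min hα hx).trans_lt hy.1
  exact (hderiv y hy0.le).hasDerivAt (Ici_mem_nhds hy0)
end

section
/- Let h : [0,∞)² → ℝ possess continuous partial derivatives ∂₁^{i}∂₂^{j}h for all i, j ∈ {0,1,2}, and fix anchors (α₁, α₂) ∈ [0,∞)². Then for every (x₁, x₂) ∈ [0,∞)² the bivariate spanning identity holds: h(x₁,x₂) = h(α₁,α₂) + h_{x₁}(α₁,α₂)(x₁−α₁) + h_{x₂}(α₁,α₂)(x₂−α₂) + h_{x₁x₂}(α₁,α₂)(x₁−α₁)(x₂−α₂) + ∫_0^{α₂} h_{x₂x₂}(α₁,K₂)(K₂−x₂)⁺ dK₂ + ∫_{α₂}^∞ h_{x₂x₂}(α₁,K₂)(x₂−K₂)⁺ dK₂ + ∫_0^{α₂} h_{x₁x₂x₂}(α₁,K₂)(x₁−α₁)(K₂−x₂)⁺ dK₂ + ∫_{α₂}^∞ h_{x₁x₂x₂}(α₁,K₂)(x₁−α₁)(x₂−K₂)⁺ dK₂ + ∫_0^{α₁} h_{x₁x₁}(K₁,α₂)(K₁−x₁)⁺ dK₁ + ∫_{α₁}^∞ h_{x₁x₁}(K₁,α₂)(x₁−K₁)⁺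 dK₁ + ∫_0^{α₁} h_{x₁x₁x₂}(K₁,α₂)(x₂−α₂)(K₁−x₁)⁺ dK₁ + ∫_{α₁}^∞ h_{x₁x₁x₂}(K₁,α₂)(x₂−α₂)(x₁−K₁)⁺ dK₁ + ∫_0^{α₁}∫_0^{α₂} h_{x₁x₁x₂x₂}(K₁,K₂)(K₁−x₁)⁺(K₂−x₂)⁺ dK₂ dK₁ + ∫_0^{α₁}∫_{α₂}^∞ h_{x₁x₁x₂x₂}(K₁,K₂)(K₁−x₁)⁺(x₂−K₂)⁺ dK₂ dK₁ + ∫_{α₁}^∞∫_0^{α₂} h_{x₁x₁x₂x₂}(K₁,K₂)(x₁−K₁)⁺(K₂−x₂)⁺ dK₂ dK₁ + ∫_{α₁}^∞∫_{α₂}^∞ h_{x₁x₁x₂x₂}(K₁,K₂)(x₁−K₁)⁺(x₂−K₂)⁺ dK₂ dK₁. All integrals converge absolutely, since each integrand with an unbounded integration range vanishes for strikes exceeding max(xᵢ, αᵢ). -/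
/-!
The one-dimensional spanning identity
`f x = f α + f' α (x - α) + ∫_{(0,α]} f''(K) (K - x)⁺ dK + ∫_{(α,∞)} f''(K) (x - K)⁺ dK`
is Taylor's formula with integral remainder, the remainder being split at `α` into put and
call payoffs. Applied to `h(x₁, ·)` it produces `h(x₁, α₂)`, `h_{x₂}(x₁, α₂)` and, under the
strike integrals, `h_{x₂x₂}(x₁, K₂)`; expanding each of these in `x₁` the same way and
exchanging the order of integration gives the sixteen terms. The expansion of `h_{x₂}(·, α₂)`
needs `∂₁ h_{x₂} = h_{x₁x₂}` and `∂₁ h_{x₁x₂} = h_{x₁x₁x₂}`, i.e. equality of mixed partials: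
the rectangle increment `g(u,z) - g(0,z) - g(u,0) + g(0,0)` equals `∫₀ᵘ ∫₀ᶻ ∂₂∂₁g`, and
differentiating in `z`, then in `u`, gives `∂₁∂₂g = ∂₂∂₁g`.
-/

open MeasureTheory Set

theorem integral_eq_sub_of_hasDerivWithinAt_Ici {f f' : ℝ → ℝ}
    (hf : ∀ t ∈ Ici (0 : ℝ), HasDerivWithinAt f (f' t) (Ici 0) t)
    (hf' : ContinuousOn f' (Ici 0)) {a b : ℝ} (ha : 0 ≤ a) (hb : 0 ≤ b) :
    ∫ t in a..b, f' t = f b - f a := by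
  have hab : uIcc a b ⊆ Ici 0 := fun t ht => (le_min ha hb).trans ht.1
  refine intervalIntegral.integral_eq_sub_of_hasDeriv_right
    (fun t ht => (hf t (hab ht)).continuousWithinAt.mono hab) (fun t ht => ?_)
    (hf'.mono hab).intervalIntegrable
  have ht : 0 < t := (le_min ha hb).trans_lt ht.1
  exact ((hf t ht.le).hasDerivAt (Ici_mem_nhds ht)).hasDerivWithinAt

theorem taylor_integral_remainder_of_hasDerivWithinAt_Ici {f f' f'' : ℝ → ℝ}
    (hf : ∀ t ∈ Ici (0 : ℝ), HasDerivWithinAt f (f' t) (Ici 0) t)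
    (hf' : ∀ t ∈ Ici (0 : ℝ), HasDerivWithinAt f' (f'' t) (Ici 0) t)
    (hf'' : ContinuousOn f'' (Ici 0)) {a x : ℝ} (ha : 0 ≤ a) (hx : 0 ≤ x) :
    f x = f a + f' a * (x - a) + ∫ t in a..x, f'' t * (x - t) := by
  have hderiv : ∀ t ∈ Ici (0 : ℝ),
      HasDerivWithinAt (fun u => f u + f' u * (x - u)) (f'' t * (x - t)) (Ici 0) t := by
    intro t ht
    exact ((hf t ht).add ((hf' t ht).mul ((hasDerivWithinAt_id t _).const_sub x))).congr_deriv
      (by rw [id_eq]; ring)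
  rw [integral_eq_sub_of_hasDerivWithinAt_Ici hderiv
    (hf''.mul (continuousOn_const.sub continuousOn_id)) ha hx]
  ring

/-- No integrability is needed: the put part lives on `Ioc x α`, the call part on `Ioc α x`. -/
theorem integral_put_add_integral_call (g : ℝ → ℝ) {x : ℝ} (hx : 0 ≤ x) (α : ℝ) :
    (∫ K in Ioc 0 α, g K * max (K - x) 0) + ∫ K in Ioi α, g K * max (x - K) 0
      = ∫ K in α..x, g K * (x - K) := by
  have hput : ∫ K in Ioc 0 α, g K * max (K - x) 0 = -∫ K in Ioc x α, g K * (x - K) := by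
    rw [setIntegral_eq_of_subset_of_forall_sdiff_eq_zero measurableSet_Ioc
      (Ioc_subset_Ioc_left hx), ← integral_neg]
    · refine setIntegral_congr_fun measurableSet_Ioc fun K hK => ?_
      rw [max_eq_left (by linarith [hK.1])]
      ring
    · rintro K ⟨hK, hKx⟩
      have : K ≤ x := not_lt.1 fun h => hKx ⟨h, hK.2⟩
      rw [max_eq_right (by linarith), mul_zero]
  have hcall : ∫ K in Ioi α, g K * max (x - K) 0 = ∫ K in Ioc α x, g K * (x - K) := by
    rw [setIntegral_eq_of_subset_of_forall_sdiff_eq_zero measurableSet_Ioi Ioc_subset_Ioi_self]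
    · exact setIntegral_congr_fun measurableSet_Ioc fun K hK => by
        rw [max_eq_left (by linarith [hK.2])]
    · rintro K ⟨hK, hKx⟩
      have : x < K := not_le.1 fun h => hKx ⟨hK, h⟩
      rw [max_eq_right (by linarith), mul_zero]
  rw [hput, hcall, intervalIntegral]
  ring

theorem spanning_one_dim {f f' f'' : ℝ → ℝ}
    (hf : ∀ t ∈ Ici (0 : ℝ), HasDerivWithinAt f (f' t) (Ici 0) t)
    (hf' : ∀ t ∈ Ici (0 : ℝ), HasDerivWithinAt f' (f'' t) (Ici 0) t)
    (hf'' : ContinuousOn f'' (Ici 0)) {α x : ℝ} (hα : 0 ≤ α) (hx : 0 ≤ x) :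
    f x = f α + f' α * (x - α)
      + (∫ K in Ioc 0 α, f'' K * max (K - x) 0) + ∫ K in Ioi α, f'' K * max (x - K) 0 := by
  linarith [taylor_integral_remainder_of_hasDerivWithinAt_Ici hf hf' hf'' hα hx,
    integral_put_add_integral_call f'' hx α]

theorem spanning_one_dim_mul {f f' f'' : ℝ → ℝ}
    (hf : ∀ t ∈ Ici (0 : ℝ), HasDerivWithinAt f (f' t) (Ici 0) t)
    (hf' : ∀ t ∈ Ici (0 : ℝ), HasDerivWithinAt f' (f'' t) (Ici 0) t)
    (hf'' : ContinuousOn f'' (Ici 0)) {α x : ℝ} (hα : 0 ≤ α) (hx : 0 ≤ x) (c : ℝ) :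
    f x * c = f α * c + f' α * ((x - α) * c)
      + (∫ K in Ioc 0 α, f'' K * (max (K - x) 0 * c))
      + ∫ K in Ioi α, f'' K * (max (x - K) 0 * c) := by
  simp_rw [← mul_assoc, integral_mul_const]
  rw [spanning_one_dim hf hf' hf'' hα hx]
  ring

/-- Vanishing beyond some strike is what makes integrals over `Ioi α` converge. -/
structure IsStrikeWeight (s : Set ℝ) (k : ℝ → ℝ) : Prop where
  measurableSet : MeasurableSet s
  subset_Ici : s ⊆ Ici 0
  continuous : Continuous k
  exists_eq_zero : ∃ b, ∀ K ∈ s, b < K → k K = 0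

theorem isStrikeWeight_put (x α : ℝ) : IsStrikeWeight (Ioc 0 α) (fun K => max (K - x) 0) where
  measurableSet := measurableSet_Ioc
  subset_Ici := Ioc_subset_Icc_self.trans Icc_subset_Ici_self
  continuous := by fun_prop
  exists_eq_zero := ⟨α, fun _ hK hαK => absurd hK.2 hαK.not_ge⟩

theorem isStrikeWeight_call {α : ℝ} (hα : 0 ≤ α) (x : ℝ) :
    IsStrikeWeight (Ioi α) (fun K => max (x - K) 0) where
  measurableSet := measurableSet_Ioi
  subset_Ici := Ioi_subset_Ici_self.trans (Ici_subset_Ici.2 hα)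
  continuous := by fun_prop
  exists_eq_zero := ⟨x, fun _ _ hxK => max_eq_right (by linarith)⟩

namespace IsStrikeWeight

variable {s s₁ s₂ : Set ℝ} {k k₁ k₂ : ℝ → ℝ}

theorem const_mul (hk : IsStrikeWeight s k) (c : ℝ) : IsStrikeWeight s (fun K => c * k K) where
  measurableSet := hk.measurableSet
  subset_Ici := hk.subset_Ici
  continuous := continuous_const.mul hk.continuous
  exists_eq_zero :=
    let ⟨b, hb⟩ := hk.exists_eq_zero
    ⟨b, fun K hK hbK => by rw [hb K hK hbK, mul_zero]⟩

theorem integrableOn_mul (hk : IsStrikeWeight s k) {g : ℝ → ℝ} (hg : ContinuousOn g (Ici 0)) :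
    IntegrableOn (fun K => g K * k K) s := by
  obtain ⟨b, hb⟩ := hk.exists_eq_zero
  refine IntegrableOn.of_forall_sdiff_eq_zero (s := Icc 0 b) ?_ hk.measurableSet ?_
  · exact ((hg.mono Icc_subset_Ici_self).mul hk.continuous.continuousOn).integrableOn_compact
      isCompact_Icc
  · rintro K ⟨hKs, hKb⟩
    rw [hb K hKs (not_le.1 fun h => hKb ⟨hk.subset_Ici hKs, h⟩), mul_zero]

theorem integrableOn_prod_mul (h₁ : IsStrikeWeight s₁ k₁) (h₂ : IsStrikeWeight s₂ k₂)
    {F : ℝ → ℝ → ℝ} (hF : ContinuousOn (fun p : ℝ × ℝ => F p.1 p.2) (Ici 0 ×ˢ Ici 0)) :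
    IntegrableOn (fun p : ℝ × ℝ => F p.1 p.2 * (k₁ p.1 * k₂ p.2)) (s₁ ×ˢ s₂) := by
  obtain ⟨b₁, hb₁⟩ := h₁.exists_eq_zero
  obtain ⟨b₂, hb₂⟩ := h₂.exists_eq_zero
  have hk : Continuous fun p : ℝ × ℝ => k₁ p.1 * k₂ p.2 :=
    (h₁.continuous.comp continuous_fst).mul (h₂.continuous.comp continuous_snd)
  refine IntegrableOn.of_forall_sdiff_eq_zero (s := Icc 0 b₁ ×ˢ Icc 0 b₂) ?_
    (h₁.measurableSet.prod h₂.measurableSet) ?_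
  · exact ((hF.mono (prod_mono Icc_subset_Ici_self Icc_subset_Ici_self)).mul
      hk.continuousOn).integrableOn_compact (isCompact_Icc.prod isCompact_Icc)
  · rintro ⟨K₁, K₂⟩ ⟨⟨hK₁, hK₂⟩, hK⟩
    by_cases h : b₁ < K₁
    · simp [hb₁ K₁ hK₁ h]
    · have : b₂ < K₂ := not_le.1 fun h' =>
        hK ⟨⟨h₁.subset_Ici hK₁, not_lt.1 h⟩, h₂.subset_Ici hK₂, h'⟩
      simp [hb₂ K₂ hK₂ this]

end IsStrikeWeight

def HasPartialDerivFst (f f₁ : ℝ → ℝ → ℝ) : Prop :=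
  ∀ x ∈ Ici (0 : ℝ), ∀ y ∈ Ici (0 : ℝ), HasDerivWithinAt (fun t => f t y) (f₁ x y) (Ici 0) x

def HasPartialDerivSnd (f f₂ : ℝ → ℝ → ℝ) : Prop :=
  ∀ x ∈ Ici (0 : ℝ), ∀ y ∈ Ici (0 : ℝ), HasDerivWithinAt (fun t => f x t) (f₂ x y) (Ici 0) y

theorem sub_sub_sub_eq_intervalIntegral_intervalIntegral {g g₁ m : ℝ → ℝ → ℝ}
    (hg : HasPartialDerivFst g g₁) (hg₁ : HasPartialDerivSnd g₁ m)
    (hcg₁ : ContinuousOn (fun p : ℝ × ℝ => g₁ p.1 p.2) (Ici 0 ×ˢ Ici 0))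
    (hcm : Continuous fun p : ℝ × ℝ => m p.1 p.2) {u z : ℝ} (hu : 0 ≤ u) (hz : 0 ≤ z) :
    g u z - g 0 z - (g u 0 - g 0 0) = ∫ w in 0..z, ∫ t in 0..u, m t w := by
  have hsect : ∀ y ∈ Ici (0 : ℝ), ContinuousOn (fun t => g₁ t y) (Ici 0) := fun y hy =>
    hcg₁.uncurry_right (f := g₁) y hy
  have hint : ∀ y ∈ Ici (0 : ℝ), IntervalIntegrable (fun t => g₁ t y) volume 0 u := fun y hy =>
    ((hsect y hy).mono fun t ht => (le_min le_rfl hu).trans ht.1).intervalIntegrable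
  have hswap : IntegrableOn (fun p : ℝ × ℝ => m p.2 p.1) (uIoc 0 z ×ˢ uIoc 0 u) :=
    ((hcm.comp continuous_swap).continuousOn.integrableOn_compact
      (isCompact_uIcc.prod isCompact_uIcc)).mono_set (prod_mono uIoc_subset_uIcc uIoc_subset_uIcc)
  have inner : EqOn (fun t => ∫ w in 0..z, m t w) (fun t => g₁ t z - g₁ t 0) (uIcc 0 u) :=
    fun t ht => integral_eq_sub_of_hasDerivWithinAt_Ici (hg₁ t ((le_min le_rfl hu).trans ht.1))
      (hcm.comp (continuous_const.prodMk continuous_id)).continuousOn le_rfl hz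
  rw [intervalIntegral_intervalIntegral_swap (F := fun w t => m t w) hswap,
    intervalIntegral.integral_congr inner,
    intervalIntegral.integral_sub (hint z hz) (hint 0 self_mem_Ici),
    integral_eq_sub_of_hasDerivWithinAt_Ici (fun t ht => hg t ht z hz) (hsect z hz) le_rfl hu,
    integral_eq_sub_of_hasDerivWithinAt_Ici (fun t ht => hg t ht 0 self_mem_Ici)
      (hsect 0 self_mem_Ici) le_rfl hu]

theorem mixed_partials_comm_of_continuous {g g₁ g₂ m : ℝ → ℝ → ℝ}
    (hg : HasPartialDerivFst g g₁) (hg' : HasPartialDerivSnd g g₂) (hg₁ : HasPartialDerivSnd g₁ m)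
    (hcg₁ : ContinuousOn (fun p : ℝ × ℝ => g₁ p.1 p.2) (Ici 0 ×ˢ Ici 0))
    (hcm : Continuous fun p : ℝ × ℝ => m p.1 p.2) : HasPartialDerivFst g₂ m := by
  intro x hx y hy
  have hprimitive : ∀ u ∈ Ici (0 : ℝ), g₂ u y = g₂ 0 y + ∫ t in 0..u, m t y := by
    intro u hu
    have hΦ : Continuous fun w => ∫ t in 0..u, m t w :=
      intervalIntegral.continuous_parametric_intervalIntegral_of_continuous'
        (f := fun w t => m t w) (hcm.comp continuous_swap) 0 u
    have h₁ : HasDerivWithinAt (fun z => g u z - g 0 z - (g u 0 - g 0 0))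
        (g₂ u y - g₂ 0 y) (Ici 0) y :=
      ((hg' u hu y hy).sub (hg' 0 self_mem_Ici y hy)).sub_const _
    have h₂ : HasDerivWithinAt (fun z => g u z - g 0 z - (g u 0 - g 0 0))
        (∫ t in 0..u, m t y) (Ici 0) y :=
      (hΦ.integral_hasStrictDerivAt 0 y).hasDerivAt.hasDerivWithinAt.congr
        (fun z hz => sub_sub_sub_eq_intervalIntegral_intervalIntegral hg hg₁ hcg₁ hcm hu hz)
        (sub_sub_sub_eq_intervalIntegral_intervalIntegral hg hg₁ hcg₁ hcm hu hy)
    linarith [(uniqueDiffOn_Ici 0 y hy).eq_deriv _ h₁ h₂]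
  have hm : Continuous fun t => m t y := hcm.comp (continuous_id.prodMk continuous_const)
  exact ((hm.integral_hasStrictDerivAt 0 x).hasDerivAt.hasDerivWithinAt.const_add (g₂ 0 y)).congr
    hprimitive (hprimitive x hx)

theorem continuous_comp_max_zero {F : ℝ → ℝ → ℝ}
    (hF : ContinuousOn (fun p : ℝ × ℝ => F p.1 p.2) (Ici 0 ×ˢ Ici 0)) :
    Continuous fun p : ℝ × ℝ => F (max p.1 0) (max p.2 0) :=
  hF.comp_continuous ((continuous_fst.max continuous_const).prodMk
    (continuous_snd.max continuous_const)) fun p => ⟨le_max_right p.1 0, le_max_right p.2 0⟩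

/-- Clamping `m` to `[0, ∞)²` extends it continuously to `ℝ²`, so that the fundamental theorem of
calculus applies at the boundary of the quadrant. -/
theorem mixed_partials_comm {g g₁ g₂ m : ℝ → ℝ → ℝ}
    (hg : HasPartialDerivFst g g₁) (hg' : HasPartialDerivSnd g g₂) (hg₁ : HasPartialDerivSnd g₁ m)
    (hcg₁ : ContinuousOn (fun p : ℝ × ℝ => g₁ p.1 p.2) (Ici 0 ×ˢ Ici 0))
    (hcm : ContinuousOn (fun p : ℝ × ℝ => m p.1 p.2) (Ici 0 ×ˢ Ici 0)) :
    HasPartialDerivFst g₂ m := by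
  have hg₁' : HasPartialDerivSnd g₁ fun s t => m (max s 0) (max t 0) := by
    intro s hs t ht
    simpa [max_eq_left (mem_Ici.1 hs), max_eq_left (mem_Ici.1 ht)] using hg₁ s hs t ht
  have hclamp := mixed_partials_comm_of_continuous hg hg' hg₁' hcg₁ (continuous_comp_max_zero hcm)
  intro x hx y hy
  simpa [max_eq_left (mem_Ici.1 hx), max_eq_left (mem_Ici.1 hy)] using hclamp x hx y hy

/-- The spanning identity of `F(·, K₂)`, integrated against `w(K₂)`; Fubini moves the
`K₁`-integrals outside. -/
theorem IsStrikeWeight.setIntegral_mul_eq_spanning {F F₁ F₂ : ℝ → ℝ → ℝ} {s : Set ℝ}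
    {w : ℝ → ℝ} (hw : IsStrikeWeight s w)
    (hF : HasPartialDerivFst F F₁) (hF₁ : HasPartialDerivFst F₁ F₂)
    (hcF : ContinuousOn (fun p : ℝ × ℝ => F p.1 p.2) (Ici 0 ×ˢ Ici 0))
    (hcF₁ : ContinuousOn (fun p : ℝ × ℝ => F₁ p.1 p.2) (Ici 0 ×ˢ Ici 0))
    (hcF₂ : ContinuousOn (fun p : ℝ × ℝ => F₂ p.1 p.2) (Ici 0 ×ˢ Ici 0))
    {α x : ℝ} (hα : 0 ≤ α) (hx : 0 ≤ x) :
    ∫ K₂ in s, F x K₂ * w K₂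
      = (∫ K₂ in s, F α K₂ * w K₂) + (∫ K₂ in s, F₁ α K₂ * ((x - α) * w K₂))
        + (∫ K₁ in Ioc 0 α, ∫ K₂ in s, F₂ K₁ K₂ * (max (K₁ - x) 0 * w K₂))
        + ∫ K₁ in Ioi α, ∫ K₂ in s, F₂ K₁ K₂ * (max (x - K₁) 0 * w K₂) := by
  have h₀ := hw.integrableOn_mul (hcF.uncurry_left (f := F) α hα)
  have h₁ := (hw.const_mul (x - α)).integrableOn_mul (hcF₁.uncurry_left (f := F₁) α hα)
  have h_put := (isStrikeWeight_put x α).integrableOn_prod_mul hw hcF₂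
  have h_call := (isStrikeWeight_call hα x).integrableOn_prod_mul hw hcF₂
  rw [IntegrableOn, Measure.volume_eq_prod, ← Measure.prod_restrict] at h_put h_call
  rw [setIntegral_congr_fun hw.measurableSet fun K₂ hK₂ =>
      spanning_one_dim_mul (fun t ht => hF t ht K₂ (hw.subset_Ici hK₂))
        (fun t ht => hF₁ t ht K₂ (hw.subset_Ici hK₂))
        (hcF₂.uncurry_right (f := F₂) K₂ (hw.subset_Ici hK₂)) hα hx (w K₂),
    integral_add ?_ ?_, integral_add ?_ ?_, integral_add h₀ h₁,
    integral_integral_swap (f := fun K₁ K₂ => F₂ K₁ K₂ * (max (K₁ - x) 0 * w K₂)) h_put,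
    integral_integral_swap (f := fun K₁ K₂ => F₂ K₁ K₂ * (max (x - K₁) 0 * w K₂)) h_call]
  · exact h₀.add h₁
  · exact h_put.integral_prod_right
  · exact (h₀.add h₁).add h_put.integral_prod_right
  · exact h_call.integral_prod_right

theorem carr_madan_spanning_two_dim_general
    (h D10 D01 D11 D20 D02 D21 D12 D22 : ℝ → ℝ → ℝ)
    (α₁ α₂ : ℝ) (hα₁ : 0 ≤ α₁) (hα₂ : 0 ≤ α₂)
    -- partial derivative hypotheses on `[0,∞)²`
    (hD10 : ∀ x₁ ∈ Ici (0:ℝ), ∀ x₂ ∈ Ici (0:ℝ),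
      HasDerivWithinAt (fun t => h t x₂) (D10 x₁ x₂) (Ici 0) x₁)
    (hD01 : ∀ x₁ ∈ Ici (0:ℝ), ∀ x₂ ∈ Ici (0:ℝ),
      HasDerivWithinAt (fun t => h x₁ t) (D01 x₁ x₂) (Ici 0) x₂)
    (hD20 : ∀ x₁ ∈ Ici (0:ℝ), ∀ x₂ ∈ Ici (0:ℝ),
      HasDerivWithinAt (fun t => D10 t x₂) (D20 x₁ x₂) (Ici 0) x₁)
    (hD02 : ∀ x₁ ∈ Ici (0:ℝ), ∀ x₂ ∈ Ici (0:ℝ),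
      HasDerivWithinAt (fun t => D01 x₁ t) (D02 x₁ x₂) (Ici 0) x₂)
    (hD11 : ∀ x₁ ∈ Ici (0:ℝ), ∀ x₂ ∈ Ici (0:ℝ),
      HasDerivWithinAt (fun t => D10 x₁ t) (D11 x₁ x₂) (Ici 0) x₂)
    (hD21 : ∀ x₁ ∈ Ici (0:ℝ), ∀ x₂ ∈ Ici (0:ℝ),
      HasDerivWithinAt (fun t => D20 x₁ t) (D21 x₁ x₂) (Ici 0) x₂)
    (hD12 : ∀ x₁ ∈ Ici (0:ℝ), ∀ x₂ ∈ Ici (0:ℝ),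
      HasDerivWithinAt (fun t => D02 t x₂) (D12 x₁ x₂) (Ici 0) x₁)
    (hD22 : ∀ x₁ ∈ Ici (0:ℝ), ∀ x₂ ∈ Ici (0:ℝ),
      HasDerivWithinAt (fun t => D12 t x₂) (D22 x₁ x₂) (Ici 0) x₁)
    -- continuity of all partial derivatives of orders `(i,j)`, `i, j ∈ {0,1,2}`
    (hc10 : ContinuousOn (fun p : ℝ × ℝ => D10 p.1 p.2) (Ici 0 ×ˢ Ici 0))
    (hc11 : ContinuousOn (fun p : ℝ × ℝ => D11 p.1 p.2) (Ici 0 ×ˢ Ici 0))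
    (hc20 : ContinuousOn (fun p : ℝ × ℝ => D20 p.1 p.2) (Ici 0 ×ˢ Ici 0))
    (hc02 : ContinuousOn (fun p : ℝ × ℝ => D02 p.1 p.2) (Ici 0 ×ˢ Ici 0))
    (hc21 : ContinuousOn (fun p : ℝ × ℝ => D21 p.1 p.2) (Ici 0 ×ˢ Ici 0))
    (hc12 : ContinuousOn (fun p : ℝ × ℝ => D12 p.1 p.2) (Ici 0 ×ˢ Ici 0))
    (hc22 : ContinuousOn (fun p : ℝ × ℝ => D22 p.1 p.2) (Ici 0 ×ˢ Ici 0))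
    (x₁ x₂ : ℝ) (hx₁ : 0 ≤ x₁) (hx₂ : 0 ≤ x₂) :
    -- absolute convergence of all integrals
    IntegrableOn (fun K₂ => D02 α₁ K₂ * max (K₂ - x₂) 0) (Ioc 0 α₂) ∧
    IntegrableOn (fun K₂ => D02 α₁ K₂ * max (x₂ - K₂) 0) (Ioi α₂) ∧
    IntegrableOn (fun K₂ => D12 α₁ K₂ * ((x₁ - α₁) * max (K₂ - x₂) 0)) (Ioc 0 α₂) ∧
    IntegrableOn (fun K₂ => D12 α₁ K₂ * ((x₁ - α₁) * max (x₂ - K₂) 0)) (Ioi α₂) ∧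
    IntegrableOn (fun K₁ => D20 K₁ α₂ * max (K₁ - x₁) 0) (Ioc 0 α₁) ∧
    IntegrableOn (fun K₁ => D20 K₁ α₂ * max (x₁ - K₁) 0) (Ioi α₁) ∧
    IntegrableOn (fun K₁ => D21 K₁ α₂ * ((x₂ - α₂) * max (K₁ - x₁) 0)) (Ioc 0 α₁) ∧
    IntegrableOn (fun K₁ => D21 K₁ α₂ * ((x₂ - α₂) * max (x₁ - K₁) 0)) (Ioi α₁) ∧
    IntegrableOn (fun p : ℝ × ℝ => D22 p.1 p.2 * (max (p.1 - x₁) 0 * max (p.2 - x₂) 0))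
      (Ioc 0 α₁ ×ˢ Ioc 0 α₂) ∧
    IntegrableOn (fun p : ℝ × ℝ => D22 p.1 p.2 * (max (p.1 - x₁) 0 * max (x₂ - p.2) 0))
      (Ioc 0 α₁ ×ˢ Ioi α₂) ∧
    IntegrableOn (fun p : ℝ × ℝ => D22 p.1 p.2 * (max (x₁ - p.1) 0 * max (p.2 - x₂) 0))
      (Ioi α₁ ×ˢ Ioc 0 α₂) ∧
    IntegrableOn (fun p : ℝ × ℝ => D22 p.1 p.2 * (max (x₁ - p.1) 0 * max (x₂ - p.2) 0))
      (Ioi α₁ ×ˢ Ioi α₂) ∧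
    -- the bivariate spanning identity
    h x₁ x₂
      = h α₁ α₂
        + D10 α₁ α₂ * (x₁ - α₁)
        + D01 α₁ α₂ * (x₂ - α₂)
        + D11 α₁ α₂ * ((x₁ - α₁) * (x₂ - α₂))
        + (∫ K₂ in Ioc 0 α₂, D02 α₁ K₂ * max (K₂ - x₂) 0)
        + (∫ K₂ in Ioi α₂, D02 α₁ K₂ * max (x₂ - K₂) 0)
        + (∫ K₂ in Ioc 0 α₂, D12 α₁ K₂ * ((x₁ - α₁) * max (K₂ - x₂) 0))
        + (∫ K₂ in Ioi α₂, D12 α₁ K₂ * ((x₁ - α₁) * max (x₂ - K₂) 0))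
        + (∫ K₁ in Ioc 0 α₁, D20 K₁ α₂ * max (K₁ - x₁) 0)
        + (∫ K₁ in Ioi α₁, D20 K₁ α₂ * max (x₁ - K₁) 0)
        + (∫ K₁ in Ioc 0 α₁, D21 K₁ α₂ * ((x₂ - α₂) * max (K₁ - x₁) 0))
        + (∫ K₁ in Ioi α₁, D21 K₁ α₂ * ((x₂ - α₂) * max (x₁ - K₁) 0))
        + (∫ K₁ in Ioc 0 α₁, ∫ K₂ in Ioc 0 α₂,
            D22 K₁ K₂ * (max (K₁ - x₁) 0 * max (K₂ - x₂) 0))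
        + (∫ K₁ in Ioc 0 α₁, ∫ K₂ in Ioi α₂,
            D22 K₁ K₂ * (max (K₁ - x₁) 0 * max (x₂ - K₂) 0))
        + (∫ K₁ in Ioi α₁, ∫ K₂ in Ioc 0 α₂,
            D22 K₁ K₂ * (max (x₁ - K₁) 0 * max (K₂ - x₂) 0))
        + ∫ K₁ in Ioi α₁, ∫ K₂ in Ioi α₂,
            D22 K₁ K₂ * (max (x₁ - K₁) 0 * max (x₂ - K₂) 0) := by
  have put₁ := isStrikeWeight_put x₁ α₁
  have call₁ := isStrikeWeight_call hα₁ x₁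
  have put₂ := isStrikeWeight_put x₂ α₂
  have call₂ := isStrikeWeight_call hα₂ x₂
  have c02 := hc02.uncurry_left (f := D02) α₁ hα₁
  have c12 := hc12.uncurry_left (f := D12) α₁ hα₁
  have c20 := hc20.uncurry_right (f := D20) α₂ hα₂
  have c21 := hc21.uncurry_right (f := D21) α₂ hα₂
  refine ⟨put₂.integrableOn_mul c02, call₂.integrableOn_mul c02,
    (put₂.const_mul _).integrableOn_mul c12, (call₂.const_mul _).integrableOn_mul c12,
    put₁.integrableOn_mul c20, call₁.integrableOn_mul c20,
    (put₁.const_mul _).integrableOn_mul c21, (call₁.const_mul _).integrableOn_mul c21,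
    put₁.integrableOn_prod_mul put₂ hc22, put₁.integrableOn_prod_mul call₂ hc22,
    call₁.integrableOn_prod_mul put₂ hc22, call₁.integrableOn_prod_mul call₂ hc22, ?_⟩
  rw [spanning_one_dim (hD01 x₁ hx₁) (hD02 x₁ hx₁) (hc02.uncurry_left (f := D02) x₁ hx₁) hα₂ hx₂,
    spanning_one_dim (fun t ht => hD10 t ht α₂ hα₂) (fun t ht => hD20 t ht α₂ hα₂) c20 hα₁ hx₁,
    spanning_one_dim_mul
      (fun t ht => mixed_partials_comm hD10 hD01 hD11 hc10 hc11 t ht α₂ hα₂)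
      (fun t ht => mixed_partials_comm hD20 hD11 hD21 hc20 hc21 t ht α₂ hα₂) c21 hα₁ hx₁,
    put₂.setIntegral_mul_eq_spanning hD12 hD22 hc02 hc12 hc22 hα₁ hx₁,
    call₂.setIntegral_mul_eq_spanning hD12 hD22 hc02 hc12 hc22 hα₁ hx₁]
  simp only [mul_comm (max _ 0) (x₂ - α₂)]
  ring

/-- **Bivariate Carr–Madan spanning identity.**
`h : [0,∞)² → ℝ` has continuous partial derivatives `∂₁^i ∂₂^j h` for `i, j ∈ {0,1,2}`
(denoted `D10 = h_{x₁}`, `D01 = h_{x₂}`, `D11 = h_{x₁x₂}`, `D20 = h_{x₁x₁}`,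
`D02 = h_{x₂x₂}`, `D21 = h_{x₁x₁x₂}`, `D12 = h_{x₁x₂x₂}`, `D22 = h_{x₁x₁x₂x₂}`).
Then the sixteen-term bivariate spanning identity holds, and all integrals
converge absolutely. -/
theorem carr_madan_spanning_two_dim
    (h D10 D01 D11 D20 D02 D21 D12 D22 : ℝ → ℝ → ℝ)
    (α₁ α₂ : ℝ) (hα₁ : 0 ≤ α₁) (hα₂ : 0 ≤ α₂)
    -- partial derivative hypotheses on `[0,∞)²`
    (hD10 : ∀ x₁ ∈ Ici (0:ℝ), ∀ x₂ ∈ Ici (0:ℝ),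
      HasDerivWithinAt (fun t => h t x₂) (D10 x₁ x₂) (Ici 0) x₁)
    (hD01 : ∀ x₁ ∈ Ici (0:ℝ), ∀ x₂ ∈ Ici (0:ℝ),
      HasDerivWithinAt (fun t => h x₁ t) (D01 x₁ x₂) (Ici 0) x₂)
    (hD20 : ∀ x₁ ∈ Ici (0:ℝ), ∀ x₂ ∈ Ici (0:ℝ),
      HasDerivWithinAt (fun t => D10 t x₂) (D20 x₁ x₂) (Ici 0) x₁)
    (hD02 : ∀ x₁ ∈ Ici (0:ℝ), ∀ x₂ ∈ Ici (0:ℝ),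
      HasDerivWithinAt (fun t => D01 x₁ t) (D02 x₁ x₂) (Ici 0) x₂)
    (hD11 : ∀ x₁ ∈ Ici (0:ℝ), ∀ x₂ ∈ Ici (0:ℝ),
      HasDerivWithinAt (fun t => D10 x₁ t) (D11 x₁ x₂) (Ici 0) x₂)
    (hD21 : ∀ x₁ ∈ Ici (0:ℝ), ∀ x₂ ∈ Ici (0:ℝ),
      HasDerivWithinAt (fun t => D20 x₁ t) (D21 x₁ x₂) (Ici 0) x₂)
    (hD12 : ∀ x₁ ∈ Ici (0:ℝ), ∀ x₂ ∈ Ici (0:ℝ),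
      HasDerivWithinAt (fun t => D02 t x₂) (D12 x₁ x₂) (Ici 0) x₁)
    (hD22 : ∀ x₁ ∈ Ici (0:ℝ), ∀ x₂ ∈ Ici (0:ℝ),
      HasDerivWithinAt (fun t => D12 t x₂) (D22 x₁ x₂) (Ici 0) x₁)
    -- continuity of all partial derivatives of orders `(i,j)`, `i, j ∈ {0,1,2}`
    (hc00 : ContinuousOn (fun p : ℝ × ℝ => h p.1 p.2) (Ici 0 ×ˢ Ici 0))
    (hc10 : ContinuousOn (fun p : ℝ × ℝ => D10 p.1 p.2) (Ici 0 ×ˢ Ici 0))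
    (hc01 : ContinuousOn (fun p : ℝ × ℝ => D01 p.1 p.2) (Ici 0 ×ˢ Ici 0))
    (hc11 : ContinuousOn (fun p : ℝ × ℝ => D11 p.1 p.2) (Ici 0 ×ˢ Ici 0))
    (hc20 : ContinuousOn (fun p : ℝ × ℝ => D20 p.1 p.2) (Ici 0 ×ˢ Ici 0))
    (hc02 : ContinuousOn (fun p : ℝ × ℝ => D02 p.1 p.2) (Ici 0 ×ˢ Ici 0))
    (hc21 : ContinuousOn (fun p : ℝ × ℝ => D21 p.1 p.2) (Ici 0 ×ˢ Ici 0))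
    (hc12 : ContinuousOn (fun p : ℝ × ℝ => D12 p.1 p.2) (Ici 0 ×ˢ Ici 0))
    (hc22 : ContinuousOn (fun p : ℝ × ℝ => D22 p.1 p.2) (Ici 0 ×ˢ Ici 0))
    (x₁ x₂ : ℝ) (hx₁ : 0 ≤ x₁) (hx₂ : 0 ≤ x₂) :
    -- absolute convergence of all integrals
    IntegrableOn (fun K₂ => D02 α₁ K₂ * max (K₂ - x₂) 0) (Ioc 0 α₂) ∧
    IntegrableOn (fun K₂ => D02 α₁ K₂ * max (x₂ - K₂) 0) (Ioi α₂) ∧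
    IntegrableOn (fun K₂ => D12 α₁ K₂ * ((x₁ - α₁) * max (K₂ - x₂) 0)) (Ioc 0 α₂) ∧
    IntegrableOn (fun K₂ => D12 α₁ K₂ * ((x₁ - α₁) * max (x₂ - K₂) 0)) (Ioi α₂) ∧
    IntegrableOn (fun K₁ => D20 K₁ α₂ * max (K₁ - x₁) 0) (Ioc 0 α₁) ∧
    IntegrableOn (fun K₁ => D20 K₁ α₂ * max (x₁ - K₁) 0) (Ioi α₁) ∧
    IntegrableOn (fun K₁ => D21 K₁ α₂ * ((x₂ - α₂) * max (K₁ - x₁) 0)) (Ioc 0 α₁) ∧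
    IntegrableOn (fun K₁ => D21 K₁ α₂ * ((x₂ - α₂) * max (x₁ - K₁) 0)) (Ioi α₁) ∧
    IntegrableOn (fun p : ℝ × ℝ => D22 p.1 p.2 * (max (p.1 - x₁) 0 * max (p.2 - x₂) 0))
      (Ioc 0 α₁ ×ˢ Ioc 0 α₂) ∧
    IntegrableOn (fun p : ℝ × ℝ => D22 p.1 p.2 * (max (p.1 - x₁) 0 * max (x₂ - p.2) 0))
      (Ioc 0 α₁ ×ˢ Ioi α₂) ∧
    IntegrableOn (fun p : ℝ × ℝ => D22 p.1 p.2 * (max (x₁ - p.1) 0 * max (p.2 - x₂) 0))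
      (Ioi α₁ ×ˢ Ioc 0 α₂) ∧
    IntegrableOn (fun p : ℝ × ℝ => D22 p.1 p.2 * (max (x₁ - p.1) 0 * max (x₂ - p.2) 0))
      (Ioi α₁ ×ˢ Ioi α₂) ∧
    -- the bivariate spanning identity
    h x₁ x₂
      = h α₁ α₂
        + D10 α₁ α₂ * (x₁ - α₁)
        + D01 α₁ α₂ * (x₂ - α₂)
        + D11 α₁ α₂ * ((x₁ - α₁) * (x₂ - α₂))
        + (∫ K₂ in Ioc 0 α₂, D02 α₁ K₂ * max (K₂ - x₂) 0)
        + (∫ K₂ in Ioi α₂, D02 α₁ K₂ * max (x₂ - K₂) 0)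
        + (∫ K₂ in Ioc 0 α₂, D12 α₁ K₂ * ((x₁ - α₁) * max (K₂ - x₂) 0))
        + (∫ K₂ in Ioi α₂, D12 α₁ K₂ * ((x₁ - α₁) * max (x₂ - K₂) 0))
        + (∫ K₁ in Ioc 0 α₁, D20 K₁ α₂ * max (K₁ - x₁) 0)
        + (∫ K₁ in Ioi α₁, D20 K₁ α₂ * max (x₁ - K₁) 0)
        + (∫ K₁ in Ioc 0 α₁, D21 K₁ α₂ * ((x₂ - α₂) * max (K₁ - x₁) 0))
        + (∫ K₁ in Ioi α₁, D21 K₁ α₂ * ((x₂ - α₂) * max (x₁ - K₁) 0))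
        + (∫ K₁ in Ioc 0 α₁, ∫ K₂ in Ioc 0 α₂,
            D22 K₁ K₂ * (max (K₁ - x₁) 0 * max (K₂ - x₂) 0))
        + (∫ K₁ in Ioc 0 α₁, ∫ K₂ in Ioi α₂,
            D22 K₁ K₂ * (max (K₁ - x₁) 0 * max (x₂ - K₂) 0))
        + (∫ K₁ in Ioi α₁, ∫ K₂ in Ioc 0 α₂,
            D22 K₁ K₂ * (max (x₁ - K₁) 0 * max (K₂ - x₂) 0))
        + ∫ K₁ in Ioi α₁, ∫ K₂ in Ioi α₂,
            D22 K₁ K₂ * (max (x₁ - K₁) 0 * max (x₂ - K₂) 0) :=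
  carr_madan_spanning_two_dim_general h D10 D01 D11 D20 D02 D21 D12 D22 α₁ α₂ hα₁ hα₂ hD10 hD01 hD20
    hD02 hD11 hD21 hD12 hD22 hc10 hc11 hc20 hc02 hc21 hc12 hc22 x₁ x₂ hx₁ hx₂
end

section
/- Let (Ω, ℱ, ℙ) be a probability space, 𝒢 ⊆ ℱ a sub-σ-algebra, (U, 𝒰, μ) a finite measure space, and g : U × Ω → ℝ a (𝒰 ⊗ ℱ)-measurable function with ∫_{U×Ω} |g| d(μ ⊗ ℙ) < ∞. Then there exists a (𝒰 ⊗ 𝒢)-measurable function G : U × Ω → ℝ such that for μ-almost every u, the function G(u, ·) is a version of the conditional expectation E[g(u, ·) | 𝒢], and such that ℙ-almost surely E[∫_U g(u, ·) μ(du) | 𝒢] = ∫_U G(u, ·) μ(du). -/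
/-!
Take `G := E_{μ ⊗ P}[g | 𝒰 ⊗ 𝒢]`. A `𝒰 ⊗ 𝒢`-measurable integrable `W` whose sections `W(u, ·)`
are versions of `E[g(u, ·) | 𝒢]` must equal `G`: its integral over `S ∈ 𝒰 ⊗ 𝒢` can be computed
section by section, and every section of `S` lies in `𝒢`. Such a `W` is explicit for indicators
of rectangles, `1_A(u) E[1_B | 𝒢]`, so the sections of `G` are right there. The class of `g` for
which they are right is linear and closed in `L¹`, because conditional expectation is an `L¹`
contraction both on `U × Ω` and on each section; the `u`-dependence of `E[g(u, ·) | 𝒢]` need not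
be measurable, so the section-wise error is controlled by the infimum of a sequence of integrable
bounds instead. The π-λ theorem and the density of simple functions then cover every integrable
`g`. The integral identity is Fubini for `G` on the sets `U × s`, `s ∈ 𝒢`.
-/

open MeasureTheory Filter Set Function
open scoped ENNReal Topology

lemma MeasurableSpace.prod_mono_right {α β : Type*} (mα : MeasurableSpace α)
    {m₁ m₂ : MeasurableSpace β} (h : m₁ ≤ m₂) : mα.prod m₁ ≤ mα.prod m₂ :=
  sup_le_sup le_rfl (MeasurableSpace.comap_mono h)

section

variable {α : Type*} {m m₀ : MeasurableSpace α} {μ : Measure[m₀] α}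

lemma lintegral_enorm_condExp_sub_le {f g : α → ℝ} (hf : Integrable f μ) (hg : Integrable g μ) :
    ∫⁻ x, ‖μ[f|m] x - μ[g|m] x‖ₑ ∂μ ≤ ∫⁻ x, ‖f x - g x‖ₑ ∂μ :=
  calc ∫⁻ x, ‖μ[f|m] x - μ[g|m] x‖ₑ ∂μ = eLpNorm (μ[f - g|m]) 1 μ := by
        rw [eLpNorm_congr_ae (condExp_sub hf hg m), eLpNorm_one_eq_lintegral_enorm]; rfl
    _ ≤ ∫⁻ x, ‖f x - g x‖ₑ ∂μ :=
        (eLpNorm_condExp_le_eLpNorm _ le_rfl).trans_eq eLpNorm_one_eq_lintegral_enorm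

end

section

variable {α : Type*} [MeasurableSpace α] {μ : Measure α}

lemma ae_eq_zero_of_forall_ae_le_of_tendsto_lintegral {d : α → ℝ≥0∞} {F : ℕ → α → ℝ≥0∞}
    (hF : ∀ n, AEMeasurable (F n) μ) (hdF : ∀ n, d ≤ᵐ[μ] F n)
    (hlim : Tendsto (fun n => ∫⁻ x, F n x ∂μ) atTop (𝓝 0)) : d =ᵐ[μ] 0 := by
  have hinf : ∫⁻ x, ⨅ n, F n x ∂μ = 0 :=
    le_antisymm (ge_of_tendsto' hlim fun n => lintegral_mono fun x => iInf_le _ n) zero_le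
  filter_upwards [(lintegral_eq_zero_iff' (AEMeasurable.iInf hF)).1 hinf, ae_all_iff.2 hdF]
    with x hx hdx
  exact le_antisymm ((le_iInf hdx).trans_eq hx) zero_le

lemma tendsto_eLpNorm_indicator_accumulate_sub [IsFiniteMeasure μ] {F : ℕ → Set α}
    (hF : ∀ i, MeasurableSet (F i)) :
    Tendsto (fun n => eLpNorm ((accumulate F n).indicator 1 - (⋃ i, F i).indicator 1 : α → ℝ) 1 μ)
      atTop (𝓝 0) := by
  have hacc : ∀ n, MeasurableSet (accumulate F n) :=
    fun n => .biUnion (to_countable _) fun i _ => hF i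
  simp_rw [eLpNorm_indicator_sub_indicator, symmDiff_of_le (accumulate_subset_iUnion _),
    Pi.one_def, eLpNorm_indicator_const ((MeasurableSet.iUnion hF).diff (hacc _)) one_ne_zero
      ENNReal.one_ne_top,
    measure_sdiff (accumulate_subset_iUnion _) (hacc _).nullMeasurableSet (measure_ne_top _ _)]
  simpa using ENNReal.Tendsto.sub (tendsto_const_nhds (x := μ (⋃ i, F i)))
    (tendsto_measure_iUnion_accumulate (f := F)) (.inr (measure_ne_top μ _))

end

section

variable {Ω U : Type*} {m : MeasurableSpace Ω} [mΩ : MeasurableSpace Ω] [mU : MeasurableSpace U]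
  {P : Measure Ω} {μ : Measure U}

variable (m P μ) in
def CondExpProdSectionwise (f : U × Ω → ℝ) : Prop :=
  ∀ᵐ u ∂μ, (fun ω => (μ.prod P)[f|mU.prod m] (u, ω)) =ᵐ[P] P[(fun ω => f (u, ω))|m]

lemma measurable_condExp_prod_section (hm : m ≤ mΩ) (f : U × Ω → ℝ) (u : U) :
    Measurable fun ω => (μ.prod P)[f|mU.prod m] (u, ω) :=
  (stronglyMeasurable_condExp.mono (MeasurableSpace.prod_mono_right mU hm)).measurable.comp
    measurable_prodMk_left

namespace CondExpProdSectionwise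

variable [SFinite P]

lemma congr {f g : U × Ω → ℝ} (hfg : f =ᵐ[μ.prod P] g) (hf : CondExpProdSectionwise m P μ f) :
    CondExpProdSectionwise m P μ g := by
  filter_upwards [hf, Measure.ae_ae_of_ae_prod (condExp_congr_ae hfg (m := mU.prod m)),
    Measure.ae_ae_of_ae_prod hfg] with u hfu hGu hfgu
  exact (EventuallyEq.trans (hGu.mono fun _ h => h.symm) hfu).trans (condExp_congr_ae hfgu)

lemma add [SFinite μ] {f g : U × Ω → ℝ}
    (hfi : Integrable f (μ.prod P)) (hgi : Integrable g (μ.prod P))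
    (hf : CondExpProdSectionwise m P μ f) (hg : CondExpProdSectionwise m P μ g) :
    CondExpProdSectionwise m P μ (f + g) := by
  filter_upwards [hf, hg, Measure.ae_ae_of_ae_prod (condExp_add hfi hgi (mU.prod m)),
    hfi.prod_right_ae, hgi.prod_right_ae] with u hfu hgu hGu hfiu hgiu
  filter_upwards [hfu, hgu, hGu, condExp_add hfiu hgiu m] with ω hfω hgω hGω hω
  simp only [Pi.add_apply] at hGω hω ⊢
  rw [hGω, hfω, hgω, ← hω]
  rfl

lemma const_smul (c : ℝ) {f : U × Ω → ℝ} (hf : CondExpProdSectionwise m P μ f) :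
    CondExpProdSectionwise m P μ (c • f) := by
  filter_upwards [hf, Measure.ae_ae_of_ae_prod (condExp_smul (μ := μ.prod P) c f (mU.prod m))]
    with u hfu hGu
  filter_upwards [hfu, hGu, condExp_smul c (fun ω => f (u, ω)) m] with ω hfω hGω hω
  simp only [Pi.smul_apply] at hGω hω ⊢
  rw [hGω, hfω, ← hω]
  rfl

lemma sub [SFinite μ] {f g : U × Ω → ℝ}
    (hfi : Integrable f (μ.prod P)) (hgi : Integrable g (μ.prod P))
    (hf : CondExpProdSectionwise m P μ f) (hg : CondExpProdSectionwise m P μ g) :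
    CondExpProdSectionwise m P μ (f - g) := by
  rw [sub_eq_add_neg, ← neg_one_smul ℝ g]
  exact hf.add hfi (hgi.smul (-1)) (hg.const_smul (-1))

end CondExpProdSectionwise

lemma lintegral_lintegral_enorm_condExp_prod_sub_le [SFinite P] {f g : U × Ω → ℝ}
    (hfi : Integrable f (μ.prod P)) (hgi : Integrable g (μ.prod P)) :
    ∫⁻ u, ∫⁻ ω, ‖(μ.prod P)[g|mU.prod m] (u, ω) - (μ.prod P)[f|mU.prod m] (u, ω)‖ₑ ∂P ∂μ ≤
      eLpNorm (f - g) 1 (μ.prod P) := by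
  rw [← lintegral_prod (fun z => ‖(μ.prod P)[g|mU.prod m] z - (μ.prod P)[f|mU.prod m] z‖ₑ)
    (integrable_condExp.1.aemeasurable.sub integrable_condExp.1.aemeasurable).enorm,
    eLpNorm_one_eq_lintegral_enorm]
  simpa only [Pi.sub_apply, enorm_sub_rev (g _)] using lintegral_enorm_condExp_sub_le hgi hfi

variable [IsFiniteMeasure P] [IsFiniteMeasure μ]

lemma condExp_prod_ae_eq_of_sections (hm : m ≤ mΩ) {f W : U × Ω → ℝ}
    (hf : Integrable f (μ.prod P)) (hW : StronglyMeasurable[mU.prod m] W)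
    (hWi : Integrable W (μ.prod P))
    (hsec : ∀ᵐ u ∂μ, (fun ω => W (u, ω)) =ᵐ[P] P[(fun ω => f (u, ω))|m]) :
    W =ᵐ[μ.prod P] (μ.prod P)[f|mU.prod m] := by
  have hm' := MeasurableSpace.prod_mono_right mU hm
  refine ae_eq_condExp_of_forall_setIntegral_eq hm' hf (fun _ _ _ => hWi.integrableOn)
    (fun S hS _ => ?_) hW.aestronglyMeasurable
  have hS' : MeasurableSet S := hm' S hS
  rw [← integral_indicator hS', ← integral_indicator hS', integral_prod _ (hWi.indicator hS'),
    integral_prod _ (hf.indicator hS')]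
  refine integral_congr_ae ?_
  filter_upwards [hsec, hf.prod_right_ae] with u hWu hfu
  have hSu : MeasurableSet[m] (Prod.mk u ⁻¹' S) := measurable_prodMk_left hS
  calc ∫ ω, S.indicator W (u, ω) ∂P = ∫ ω in Prod.mk u ⁻¹' S, W (u, ω) ∂P :=
        integral_indicator (hm _ hSu)
    _ = ∫ ω in Prod.mk u ⁻¹' S, P[(fun ω => f (u, ω))|m] ω ∂P :=
        setIntegral_congr_ae (hm _ hSu) (hWu.mono fun _ h _ => h)
    _ = ∫ ω in Prod.mk u ⁻¹' S, f (u, ω) ∂P := setIntegral_condExp hm hfu hSu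
    _ = ∫ ω, S.indicator f (u, ω) ∂P := (integral_indicator (hm _ hSu)).symm

lemma condExpProdSectionwise_of_sections (hm : m ≤ mΩ) {f W : U × Ω → ℝ}
    (hf : Integrable f (μ.prod P)) (hW : StronglyMeasurable[mU.prod m] W)
    (hWi : Integrable W (μ.prod P))
    (hsec : ∀ᵐ u ∂μ, (fun ω => W (u, ω)) =ᵐ[P] P[(fun ω => f (u, ω))|m]) :
    CondExpProdSectionwise m P μ f := by
  filter_upwards [hsec, Measure.ae_ae_of_ae_prod (condExp_prod_ae_eq_of_sections hm hf hW hWi hsec)]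
    with u hWu hGu
  exact EventuallyEq.trans (hGu.mono fun _ h => h.symm) hWu

lemma condExpProdSectionwise_const (hm : m ≤ mΩ) (c : ℝ) :
    CondExpProdSectionwise m P μ (fun _ => c) := by
  refine ae_of_all _ fun u => ?_
  simp only [condExp_const (MeasurableSpace.prod_mono_right mU hm), condExp_const hm]
  rfl

lemma condExpProdSectionwise_indicator_prod (hm : m ≤ mΩ) {A : Set U} {B : Set Ω}
    (hA : MeasurableSet A) (hB : MeasurableSet B) :
    CondExpProdSectionwise m P μ ((A ×ˢ B).indicator 1) := by
  refine condExpProdSectionwise_of_sections hm ((integrable_const 1).indicator (hA.prod hB))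
    (W := fun z => A.indicator 1 z.1 * P[B.indicator 1|m] z.2) ?_
    (((integrable_const 1).indicator hA).mul_prod integrable_condExp)
    (ae_of_all _ fun u => ?_)
  · exact ((stronglyMeasurable_one.indicator hA).comp_measurable measurable_fst).mul
      (stronglyMeasurable_condExp.comp_measurable measurable_snd)
  · simp_rw [indicator_prod_one]
    exact (condExp_smul (A.indicator 1 u : ℝ) (B.indicator 1) m).symm

lemma CondExpProdSectionwise.ae_lintegral_enorm_sub_le (hm : m ≤ mΩ) {f g : U × Ω → ℝ}
    (hfi : Integrable f (μ.prod P)) (hgi : Integrable g (μ.prod P))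
    (hf : CondExpProdSectionwise m P μ f) :
    ∀ᵐ u ∂μ, ∫⁻ ω, ‖(μ.prod P)[g|mU.prod m] (u, ω) - P[(fun ω => g (u, ω))|m] ω‖ₑ ∂P ≤
      ∫⁻ ω, ‖(μ.prod P)[g|mU.prod m] (u, ω) - (μ.prod P)[f|mU.prod m] (u, ω)‖ₑ ∂P
        + ∫⁻ ω, ‖f (u, ω) - g (u, ω)‖ₑ ∂P := by
  filter_upwards [hf, hfi.prod_right_ae, hgi.prod_right_ae] with u hfu hfiu hgiu
  calc ∫⁻ ω, ‖(μ.prod P)[g|mU.prod m] (u, ω) - P[(fun ω => g (u, ω))|m] ω‖ₑ ∂P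
      ≤ ∫⁻ ω, ‖(μ.prod P)[g|mU.prod m] (u, ω) - (μ.prod P)[f|mU.prod m] (u, ω)‖ₑ
          + ‖P[(fun ω => f (u, ω))|m] ω - P[(fun ω => g (u, ω))|m] ω‖ₑ ∂P := by
        refine lintegral_mono_ae ?_
        filter_upwards [hfu] with ω hω
        rw [← hω]
        simpa only [edist_eq_enorm_sub] using edist_triangle (α := ℝ) _ _ _
    _ ≤ _ := by
        rw [lintegral_add_left (f := fun ω =>
          ‖(μ.prod P)[g|mU.prod m] (u, ω) - (μ.prod P)[f|mU.prod m] (u, ω)‖ₑ)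
          ((measurable_condExp_prod_section hm g u).sub
            (measurable_condExp_prod_section hm f u)).enorm]
        exact add_le_add le_rfl (lintegral_enorm_condExp_sub_le hfiu hgiu)

lemma CondExpProdSectionwise.of_tendsto (hm : m ≤ mΩ) {f : ℕ → U × Ω → ℝ} {g : U × Ω → ℝ}
    (hfi : ∀ n, Integrable (f n) (μ.prod P)) (hgi : Integrable g (μ.prod P))
    (hf : ∀ n, CondExpProdSectionwise m P μ (f n))
    (hlim : Tendsto (fun n => eLpNorm (f n - g) 1 (μ.prod P)) atTop (𝓝 0)) :
    CondExpProdSectionwise m P μ g := by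
  set a := fun n u =>
    ∫⁻ ω, ‖(μ.prod P)[g|mU.prod m] (u, ω) - (μ.prod P)[f n|mU.prod m] (u, ω)‖ₑ ∂P
  set b := fun n u => ∫⁻ ω, ‖f n (u, ω) - g (u, ω)‖ₑ ∂P
  have ha : ∀ n, AEMeasurable (a n) μ := fun n =>
    (integrable_condExp.1.aemeasurable.sub
      integrable_condExp.1.aemeasurable).enorm.lintegral_prod_right'
  have hb : ∀ n, AEMeasurable (b n) μ := fun n =>
    ((hfi n).1.aemeasurable.sub hgi.1.aemeasurable).enorm.lintegral_prod_right'
  have hab : ∀ n, ∫⁻ u, a n u + b n u ∂μ ≤ 2 * eLpNorm (f n - g) 1 (μ.prod P) := fun n => by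
    have hb_eq : ∫⁻ u, b n u ∂μ = eLpNorm (f n - g) 1 (μ.prod P) := by
      rw [eLpNorm_one_eq_lintegral_enorm,
        lintegral_prod _ ((hfi n).1.aemeasurable.sub hgi.1.aemeasurable).enorm]
      rfl
    rw [lintegral_add_right' _ (hb n), hb_eq, two_mul]
    exact add_le_add (lintegral_lintegral_enorm_condExp_prod_sub_le (hfi n) hgi) le_rfl
  have hzero := ae_eq_zero_of_forall_ae_le_of_tendsto_lintegral (fun n => (ha n).add (hb n))
    (fun n => (hf n).ae_lintegral_enorm_sub_le hm (hfi n) hgi)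
    (tendsto_of_tendsto_of_tendsto_of_le_of_le tendsto_const_nhds
      (by simpa using ENNReal.Tendsto.const_mul hlim (.inr ENNReal.ofNat_ne_top))
      (fun _ => zero_le) hab)
  filter_upwards [hzero] with u hu
  have hcm : Measurable (P[(fun ω => g (u, ω))|m]) :=
    (stronglyMeasurable_condExp.mono hm).measurable
  filter_upwards [(lintegral_eq_zero_iff
    ((measurable_condExp_prod_section hm g u).sub hcm).enorm).1 hu] with ω hω
  simpa [sub_eq_zero] using hω

lemma condExpProdSectionwise_indicator_iUnion (hm : m ≤ mΩ) {F : ℕ → Set (U × Ω)}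
    (hdisj : Pairwise (Disjoint on F)) (hF : ∀ i, MeasurableSet (F i))
    (h : ∀ i, CondExpProdSectionwise m P μ ((F i).indicator 1)) :
    CondExpProdSectionwise m P μ ((⋃ i, F i).indicator 1) := by
  have hint : ∀ {S : Set (U × Ω)}, MeasurableSet S → Integrable (S.indicator 1) (μ.prod P) :=
    fun hS => (integrable_const (1 : ℝ)).indicator hS
  have hacc : ∀ n, MeasurableSet (accumulate F n) :=
    fun n => .biUnion (to_countable _) fun i _ => hF i
  refine .of_tendsto hm (fun n => hint (hacc n)) (hint (.iUnion hF)) (fun n => ?_)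
    (tendsto_eLpNorm_indicator_accumulate_sub hF)
  induction n with
  | zero => simpa using h 0
  | succ n ih =>
    rw [accumulate_succ, indicator_union_of_disjoint (disjoint_accumulate hdisj n.lt_succ_self)]
    exact ih.add (hint (hacc n)) (hint (hF _)) (h _)

lemma condExpProdSectionwise_indicator (hm : m ≤ mΩ) {S : Set (U × Ω)} (hS : MeasurableSet S) :
    CondExpProdSectionwise m P μ (S.indicator 1) := by
  induction S, hS using
    MeasurableSpace.induction_on_inter generateFrom_prod.symm isPiSystem_prod with
  | empty => simpa using condExpProdSectionwise_const hm 0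
  | basic t ht =>
    obtain ⟨A, hA, B, hB, rfl⟩ := ht
    exact condExpProdSectionwise_indicator_prod hm hA hB
  | compl t ht iht =>
    rw [indicator_compl]
    exact (condExpProdSectionwise_const hm 1).sub (integrable_const 1)
      ((integrable_const 1).indicator ht) iht
  | iUnion F hdisj hF ihF => exact condExpProdSectionwise_indicator_iUnion hm hdisj hF ihF

lemma condExpProdSectionwise_of_integrable (hm : m ≤ mΩ) {f : U × Ω → ℝ}
    (hf : Integrable f (μ.prod P)) : CondExpProdSectionwise m P μ f := by
  refine Integrable.induction (fun f => CondExpProdSectionwise m P μ f) (fun c S hS _ => ?_)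
    (fun _ _ _ hfi hgi hf hg => hf.add hfi hgi hg) ?_ (fun _ _ hfg _ hf => hf.congr hfg) hf
  · have hc : S.indicator (fun _ => c) = c • S.indicator 1 := by
      ext z
      by_cases hz : z ∈ S <;> simp [hz]
    rw [hc]
    exact (condExpProdSectionwise_indicator hm hS).const_smul c
  · refine IsSeqClosed.isClosed fun F f hF hlim => ?_
    exact .of_tendsto hm (fun n => L1.integrable_coeFn _) (L1.integrable_coeFn f) hF
      ((Lp.tendsto_Lp_iff_tendsto_eLpNorm' _ _).1 hlim)

lemma condExp_integral_ae_eq_integral_condExp_prod (hm : m ≤ mΩ) {g : U × Ω → ℝ}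
    (hg : Integrable g (μ.prod P)) :
    P[(fun ω => ∫ u, g (u, ω) ∂μ)|m] =ᵐ[P] fun ω => ∫ u, (μ.prod P)[g|mU.prod m] (u, ω) ∂μ := by
  have hG : Integrable ((μ.prod P)[g|mU.prod m]) (μ.prod P) := integrable_condExp
  refine (ae_eq_condExp_of_forall_setIntegral_eq hm hg.integral_prod_right
    (fun _ _ _ => hG.integral_prod_right.integrableOn) (fun s hs _ => ?_)
    (@StronglyMeasurable.integral_prod_left' U Ω ℝ mU m μ _ _ _ _
      stronglyMeasurable_condExp).aestronglyMeasurable).symm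
  have hrestr : μ.prod (P.restrict s) = (μ.prod P).restrict (univ ×ˢ s) := by
    rw [← Measure.prod_restrict, Measure.restrict_univ]
  rw [← integral_prod_symm _ (hrestr ▸ hG.restrict), ← integral_prod_symm _ (hrestr ▸ hg.restrict),
    hrestr, setIntegral_condExp (MeasurableSpace.prod_mono_right mU hm) hg
      (MeasurableSet.univ.prod hs)]

end

theorem conditional_fubini_general
    {Ω : Type*} (m : MeasurableSpace Ω) [mΩ : MeasurableSpace Ω] (hm : m ≤ mΩ)
    (P : Measure Ω) [IsProbabilityMeasure P]
    {U : Type*} [mU : MeasurableSpace U] (μ : Measure U) [IsFiniteMeasure μ]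
    (g : U × Ω → ℝ)
    (hint : Integrable g (μ.prod P)) :
    ∃ G : U × Ω → ℝ,
      Measurable[mU.prod m] G ∧
      (∀ᵐ u ∂μ, (fun ω => G (u, ω)) =ᵐ[P] P[(fun ω => g (u, ω))|m]) ∧
      P[(fun ω => ∫ u, g (u, ω) ∂μ)|m] =ᵐ[P] fun ω => ∫ u, G (u, ω) ∂μ :=
  ⟨(μ.prod P)[g|mU.prod m], stronglyMeasurable_condExp.measurable,
    condExpProdSectionwise_of_integrable hm hint,
    condExp_integral_ae_eq_integral_condExp_prod hm hint⟩

/-- **Conditional Fubini interchange.** Let `𝒢 = m` be a sub-σ-algebra of `ℱ = mΩ`, `μ` a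
finite measure on `U`, and `g : U × Ω → ℝ` jointly measurable with
`∫∫ |g| d(μ ⊗ ℙ) < ∞`. Then there is a `(𝒰 ⊗ 𝒢)`-measurable `G` such that for
`μ`-a.e. `u` the section `G(u, ·)` is a version of `E[g(u, ·) | 𝒢]`, and `ℙ`-a.s.
`E[∫ g(u, ·) μ(du) | 𝒢] = ∫ G(u, ·) μ(du)`. -/
theorem conditional_fubini
    {Ω : Type*} (m : MeasurableSpace Ω) [mΩ : MeasurableSpace Ω] (hm : m ≤ mΩ)
    (P : Measure Ω) [IsProbabilityMeasure P]
    {U : Type*} [mU : MeasurableSpace U] (μ : Measure U) [IsFiniteMeasure μ]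
    (g : U × Ω → ℝ) (hmeas : Measurable g)
    (hint : Integrable g (μ.prod P)) :
    ∃ G : U × Ω → ℝ,
      Measurable[mU.prod m] G ∧
      (∀ᵐ u ∂μ, (fun ω => G (u, ω)) =ᵐ[P] P[(fun ω => g (u, ω))|m]) ∧
      P[(fun ω => ∫ u, g (u, ω) ∂μ)|m] =ᵐ[P] fun ω => ∫ u, G (u, ω) ∂μ :=
  conditional_fubini_general m (mΩ := mΩ) hm P (mU := mU) μ g hint
end

section
/- Let A, B, C, D be real d×d matrices, let ℋ be the 2d×2d block matrix ℋ = [[A, B], [C, D]], and let V be a real d×d matrix. For τ ∈ ℝ write exp(τℋ) in d×d blocks as [[Θ₁₁(τ), Θ₁₂(τ)], [Θ₂₁(τ), Θ₂₂(τ)]], and set P(τ) = Θ₁₁(τ) + Θ₁₂(τ)V and R(τ) = Θ₂₁(τ) + Θ₂₂(τ)V. Suppose P(τ) is invertible for every τ ∈ [0, T]. Then Ψ(τ) := R(τ)·P(τ)⁻¹ satisfies Ψ(0) = V and is differentiable on [0, T] with Ψ'(τ) = C + D·Ψ(τ) − Ψ(τ)·A − Ψ(τ)·B·Ψ(τ)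 for all τ ∈ [0, T]. -/
/-!
The stacked matrix `Y(τ) = exp(τℋ) [1; V] = [P(τ); R(τ)]` solves the linear equation `Y' = ℋY`,
that is `P' = AP + BR` and `R' = CP + DR`. Differentiating `Ψ = RP⁻¹` with
`(P⁻¹)' = -P⁻¹P'P⁻¹` then gives `Ψ' = (CP + DR)P⁻¹ - RP⁻¹(AP + BR)P⁻¹ = C + DΨ - ΨA - ΨBΨ`.
-/

open Matrix NormedSpace

section NormedAlgebra

variable {𝕜 𝔸 : Type*} [NontriviallyNormedField 𝕜] [NormedRing 𝔸] [NormedAlgebra 𝕜 𝔸]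
  [HasSummableGeomSeries 𝔸] {P R : 𝕜 → 𝔸} {P' : 𝔸} {s : Set 𝕜} {x : 𝕜}

theorem HasDerivWithinAt.ringInverse (hP : HasDerivWithinAt P P' s x) (hu : IsUnit (P x)) :
    HasDerivWithinAt (fun t => Ring.inverse (P t))
      (-(Ring.inverse (P x) * P' * Ring.inverse (P x))) s x := by
  obtain ⟨u, hu⟩ := hu
  have hinv := hasFDerivAt_ringInverse (𝕜 := 𝕜) u
  rw [hu] at hinv
  simpa [← hu, Function.comp_def] using hinv.comp_hasDerivWithinAt x hP

theorem HasDerivWithinAt.riccati {A B C D : 𝔸}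
    (hP : HasDerivWithinAt P (A * P x + B * R x) s x)
    (hR : HasDerivWithinAt R (C * P x + D * R x) s x) (hu : IsUnit (P x)) :
    HasDerivWithinAt (fun t => R t * Ring.inverse (P t))
      (C + D * (R x * Ring.inverse (P x)) - R x * Ring.inverse (P x) * A
        - R x * Ring.inverse (P x) * B * (R x * Ring.inverse (P x))) s x := by
  refine (hR.mul (hP.ringInverse hu)).congr_deriv ?_
  set Q := Ring.inverse (P x)
  have hPQ : P x * Q = 1 := Ring.mul_inverse_cancel _ hu
  calc (C * P x + D * R x) * Q + R x * -(Q * (A * P x + B * R x) * Q)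
      = C * (P x * Q) + D * R x * Q - R x * Q * A * (P x * Q) - R x * Q * B * (R x * Q) := by
        noncomm_ring
    _ = _ := by rw [hPQ]; noncomm_ring

end NormedAlgebra

namespace Matrix

section Entrywise

variable {𝕜 : Type*} [NontriviallyNormedField 𝕜] {l m n : Type*} [Fintype n] {s : Set 𝕜} {x : 𝕜}

theorem hasDerivWithinAt_iff {F : Type*} [NormedAddCommGroup F] [NormedSpace 𝕜 F]
    {f : 𝕜 → Matrix m n F} {f' : Matrix m n F} :
    HasDerivWithinAt f f' s x ↔ ∀ i j, HasDerivWithinAt (fun t => f t i j) (f' i j) s x :=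
  hasDerivWithinAt_pi.trans <| forall_congr' fun _ => hasDerivWithinAt_pi

theorem hasDerivWithinAt_fromRows_iff {f : 𝕜 → Matrix l n 𝕜} {g : 𝕜 → Matrix m n 𝕜}
    {f' : Matrix l n 𝕜} {g' : Matrix m n 𝕜} :
    HasDerivWithinAt (fun t => fromRows (f t) (g t)) (fromRows f' g') s x ↔
      HasDerivWithinAt f f' s x ∧ HasDerivWithinAt g g' s x := by
  simp only [hasDerivWithinAt_iff, Sum.forall, fromRows_apply_inl, fromRows_apply_inr]

theorem _root_.HasDerivWithinAt.matrix_mul_const [Fintype m] {𝔸 : Type*} [NormedRing 𝔸]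
    [NormedAlgebra 𝕜 𝔸] {f : 𝕜 → Matrix l m 𝔸} {f' : Matrix l m 𝔸}
    (hf : HasDerivWithinAt f f' s x) (B : Matrix m n 𝔸) :
    HasDerivWithinAt (fun t => f t * B) (f' * B) s x := by
  rw [hasDerivWithinAt_iff] at hf ⊢
  intro i j
  simp only [mul_apply]
  exact HasDerivWithinAt.fun_sum fun k _ => (hf i k).mul_const (B k j)

end Entrywise

/- Matrices carry no global norm: the proofs below choose the `L∞` operator norm locally. It induces
the product topology the statements are phrased in, but completeness must be stated for its own
uniformity. -/
variable {𝕂 : Type*} [RCLike 𝕂] {m : Type*} [Fintype m] [DecidableEq m]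

theorem hasDerivWithinAt_exp_smul_mul {n : Type*} [Fintype n] (ℋ : Matrix m m 𝕂)
    (Y₀ : Matrix m n 𝕂) (s : Set 𝕂) (τ : 𝕂) :
    HasDerivWithinAt (fun t : 𝕂 => exp (t • ℋ) * Y₀) (ℋ * (exp (τ • ℋ) * Y₀)) s τ := by
  have hexp : HasDerivWithinAt (fun t : 𝕂 => exp (t • ℋ)) (ℋ * exp (τ • ℋ)) s τ := by
    let _ := Matrix.linftyOpNormedRing (n := m) (α := 𝕂)
    let _ := Matrix.linftyOpNormedAlgebra (n := m) (R := 𝕂) (α := 𝕂)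
    have : @CompleteSpace (Matrix m m 𝕂) PseudoMetricSpace.toUniformSpace :=
      FiniteDimensional.complete 𝕂 _
    exact (hasDerivAt_exp_smul_const' ℋ τ).hasDerivWithinAt
  simpa only [Matrix.mul_assoc] using hexp.matrix_mul_const Y₀

theorem hasDerivWithinAt_riccati {A B C D : Matrix m m 𝕂} {P R : 𝕂 → Matrix m m 𝕂}
    {s : Set 𝕂} {x : 𝕂}
    (hP : HasDerivWithinAt P (A * P x + B * R x) s x)
    (hR : HasDerivWithinAt R (C * P x + D * R x) s x) (hu : IsUnit (P x)) :
    HasDerivWithinAt (fun t => R t * (P t)⁻¹)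
      (C + D * (R x * (P x)⁻¹) - R x * (P x)⁻¹ * A
        - R x * (P x)⁻¹ * B * (R x * (P x)⁻¹)) s x := by
  let _ := Matrix.linftyOpNormedRing (n := m) (α := 𝕂)
  let _ := Matrix.linftyOpNormedAlgebra (n := m) (R := 𝕂) (α := 𝕂)
  have : @CompleteSpace (Matrix m m 𝕂) PseudoMetricSpace.toUniformSpace :=
    FiniteDimensional.complete 𝕂 _
  simp only [nonsing_inv_eq_ringInverse]
  exact hP.riccati hR hu

end Matrix

theorem riccati_linearization_general (d : ℕ) (T : ℝ)
    (A B C D V : Matrix (Fin d) (Fin d) ℝ)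
    (Θ₁₁ Θ₁₂ Θ₂₁ Θ₂₂ : ℝ → Matrix (Fin d) (Fin d) ℝ)
    (hΘ₁₁ : ∀ τ : ℝ, Θ₁₁ τ = (NormedSpace.exp (τ • fromBlocks A B C D)).toBlocks₁₁)
    (hΘ₁₂ : ∀ τ : ℝ, Θ₁₂ τ = (NormedSpace.exp (τ • fromBlocks A B C D)).toBlocks₁₂)
    (hΘ₂₁ : ∀ τ : ℝ, Θ₂₁ τ = (NormedSpace.exp (τ • fromBlocks A B C D)).toBlocks₂₁)
    (hΘ₂₂ : ∀ τ : ℝ, Θ₂₂ τ = (NormedSpace.exp (τ • fromBlocks A B C D)).toBlocks₂₂)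
    (P R : ℝ → Matrix (Fin d) (Fin d) ℝ)
    (hP : ∀ τ : ℝ, P τ = Θ₁₁ τ + Θ₁₂ τ * V)
    (hR : ∀ τ : ℝ, R τ = Θ₂₁ τ + Θ₂₂ τ * V)
    (hPinv : ∀ τ ∈ Set.Icc (0 : ℝ) T, IsUnit (P τ))
    (Ψ : ℝ → Matrix (Fin d) (Fin d) ℝ)
    (hΨ : ∀ τ : ℝ, Ψ τ = R τ * (P τ)⁻¹) :
    Ψ 0 = V ∧
    ∀ τ ∈ Set.Icc (0 : ℝ) T, ∀ i j,
      HasDerivWithinAt (fun t => Ψ t i j)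
        ((C + D * Ψ τ - Ψ τ * A - Ψ τ * B * Ψ τ) i j) (Set.Icc 0 T) τ := by
  set ℋ := fromBlocks A B C D
  have hY : ∀ t : ℝ, exp (t • ℋ) * fromRows (1 : Matrix (Fin d) (Fin d) ℝ) V =
      fromRows (P t) (R t) := fun t => by
    have hblocks : exp (t • ℋ) = fromBlocks (Θ₁₁ t) (Θ₁₂ t) (Θ₂₁ t) (Θ₂₂ t) := by
      rw [hΘ₁₁, hΘ₁₂, hΘ₂₁, hΘ₂₂, fromBlocks_toBlocks]
    rw [hblocks, fromBlocks_mul_fromRows, hP, hR, mul_one, mul_one]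
  refine ⟨?_, fun τ hτ => ?_⟩
  · obtain ⟨hP0, hR0⟩ := by
      simpa only [zero_smul, exp_zero, Matrix.one_mul, fromRows_ext_iff] using hY 0
    rw [hΨ, ← hP0, ← hR0, inv_one, mul_one]
  have hYderiv :=
    hasDerivWithinAt_exp_smul_mul ℋ (fromRows (1 : Matrix (Fin d) (Fin d) ℝ) V) (Set.Icc 0 T) τ
  rw [hY τ, fromBlocks_mul_fromRows] at hYderiv
  simp only [hY] at hYderiv
  obtain ⟨hPderiv, hRderiv⟩ := hasDerivWithinAt_fromRows_iff.1 hYderiv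
  have hΨderiv := hasDerivWithinAt_riccati hPderiv hRderiv (hPinv τ hτ)
  rw [← hΨ, ← funext hΨ] at hΨderiv
  exact hasDerivWithinAt_iff.1 hΨderiv

/-- **Linearization of the matrix Riccati equation via a Hamiltonian block matrix.**
Write `exp(τℋ)` for `ℋ = [[A, B], [C, D]]` in `d×d` blocks `Θᵢⱼ(τ)`, and set
`P(τ) = Θ₁₁(τ) + Θ₁₂(τ)V`, `R(τ) = Θ₂₁(τ) + Θ₂₂(τ)V`. If `P(τ)` is invertible for
every `τ ∈ [0, T]`, then `Ψ(τ) = R(τ)P(τ)⁻¹` satisfies `Ψ(0) = V` and the Riccati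
equation `Ψ' = C + DΨ − ΨA − ΨBΨ` on `[0, T]` (stated entrywise). -/
theorem riccati_linearization (d : ℕ) (T : ℝ) (hT : 0 ≤ T)
    (A B C D V : Matrix (Fin d) (Fin d) ℝ)
    (Θ₁₁ Θ₁₂ Θ₂₁ Θ₂₂ : ℝ → Matrix (Fin d) (Fin d) ℝ)
    (hΘ₁₁ : ∀ τ : ℝ, Θ₁₁ τ = (NormedSpace.exp (τ • fromBlocks A B C D)).toBlocks₁₁)
    (hΘ₁₂ : ∀ τ : ℝ, Θ₁₂ τ = (NormedSpace.exp (τ • fromBlocks A B C D)).toBlocks₁₂)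
    (hΘ₂₁ : ∀ τ : ℝ, Θ₂₁ τ = (NormedSpace.exp (τ • fromBlocks A B C D)).toBlocks₂₁)
    (hΘ₂₂ : ∀ τ : ℝ, Θ₂₂ τ = (NormedSpace.exp (τ • fromBlocks A B C D)).toBlocks₂₂)
    (P R : ℝ → Matrix (Fin d) (Fin d) ℝ)
    (hP : ∀ τ : ℝ, P τ = Θ₁₁ τ + Θ₁₂ τ * V)
    (hR : ∀ τ : ℝ, R τ = Θ₂₁ τ + Θ₂₂ τ * V)
    (hPinv : ∀ τ ∈ Set.Icc (0 : ℝ) T, IsUnit (P τ))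
    (Ψ : ℝ → Matrix (Fin d) (Fin d) ℝ)
    (hΨ : ∀ τ : ℝ, Ψ τ = R τ * (P τ)⁻¹) :
    Ψ 0 = V ∧
    ∀ τ ∈ Set.Icc (0 : ℝ) T, ∀ i j,
      HasDerivWithinAt (fun t => Ψ t i j)
        ((C + D * Ψ τ - Ψ τ * A - Ψ τ * B * Ψ τ) i j) (Set.Icc 0 T) τ :=
  riccati_linearization_general d T A B C D V Θ₁₁ Θ₁₂ Θ₂₁ Θ₂₂ hΘ₁₁ hΘ₁₂ hΘ₂₁ hΘ₂₂ P R hP hR hPinv Ψ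
    hΨ
end

section
/- Let K > 0 be real and let u₁, u₂ ∈ ℂ with Re(u₂) < 0 and Re(u₁) + Re(u₂) > 1. Then the bilateral Laplace transform of the two-asset spread option payoff converges absolutely and ∫_{ℝ²} e^{−u₁x₁ − u₂x₂}·(e^{x₁} − e^{x₂} − K)⁺ dx₁ dx₂ = K^{1−u₁−u₂} · Γ(u₁ + u₂ − 1) · Γ(−u₂) / Γ(u₁ + 1). -/
/-!
Integrate first in `x₁`: for fixed `x₂` the payoff is a call payoff `(e^{x₁} - c)⁺` with strike
`c = e^{x₂} + K`, whose transform is `c^{1-u₁} / (u₁ (u₁ - 1))`. The remaining integral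
`∫ e^{-u₂ y} (e^y + K)^{1-u₁} dy` becomes, after the shift `y ↦ y + log K` and the substitution
`w = sigmoid y`, the Beta integral `K^{1-u₁-u₂} B(-u₂, u₁+u₂-1)`, and
`B(-u₂, u₁+u₂-1) = Γ(-u₂) Γ(u₁+u₂-1) / Γ(u₁-1)` with `Γ(u₁+1) = u₁ (u₁-1) Γ(u₁-1)`.
Absolute convergence is the same computation with `u₁, u₂` replaced by their real parts.
-/

open MeasureTheory Set Filter Real
open scoped Complex

lemma ofReal_cpow_eq_cexp_mul_log {c : ℝ} (hc : 0 < c) (s : ℂ) :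
    (c : ℂ) ^ s = cexp (s * log c) := by
  rw [Complex.cpow_def_of_ne_zero (by exact_mod_cast hc.ne'), ← Complex.ofReal_log hc.le, mul_comm]

section Call

lemma cexp_mul_max_exp_sub_eq_indicator {c : ℝ} (hc : 0 < c) (u : ℂ) :
    (fun x : ℝ => cexp (-(u * x)) * (max (exp x - c) 0 : ℝ)) =
      (Ioi (log c)).indicator (fun x : ℝ => cexp ((1 - u) * x) - c * cexp (-u * x)) := by
  funext x
  by_cases hx : x ∈ Ioi (log c)
  · have hcx : c < exp x := (log_lt_iff_lt_exp hc).1 hx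
    rw [indicator_of_mem hx, max_eq_left (sub_nonneg.2 hcx.le), Complex.ofReal_sub,
      Complex.ofReal_exp, mul_sub, ← Complex.exp_add]
    ring_nf
  · have hxc : exp x ≤ c := by rwa [mem_Ioi, not_lt, le_log_iff_exp_le hc] at hx
    rw [indicator_of_notMem hx, max_eq_right (sub_nonpos.2 hxc)]
    simp

variable {u : ℂ} {c : ℝ}

lemma integrable_cexp_mul_max_exp_sub (hu : 1 < u.re) (hc : 0 < c) :
    Integrable (fun x : ℝ => cexp (-(u * x)) * (max (exp x - c) 0 : ℝ)) := by
  rw [cexp_mul_max_exp_sub_eq_indicator hc, integrable_indicator_iff measurableSet_Ioi]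
  exact (integrableOn_exp_mul_complex_Ioi (by simpa using hu) _).sub
    ((integrableOn_exp_mul_complex_Ioi (by simp; linarith) _).const_mul _)

lemma integral_cexp_mul_max_exp_sub (hu : 1 < u.re) (hc : 0 < c) :
    ∫ x : ℝ, cexp (-(u * x)) * (max (exp x - c) 0 : ℝ) = (c : ℂ) ^ (1 - u) / (u * (u - 1)) := by
  have hre₁ : (1 - u).re < 0 := by simpa using hu
  have hre₀ : (-u).re < 0 := by simp; linarith
  rw [cexp_mul_max_exp_sub_eq_indicator hc, integral_indicator measurableSet_Ioi,
    integral_sub (integrableOn_exp_mul_complex_Ioi hre₁ _)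
      ((integrableOn_exp_mul_complex_Ioi hre₀ _).const_mul _),
    integral_const_mul, integral_exp_mul_complex_Ioi hre₁, integral_exp_mul_complex_Ioi hre₀]
  have hsplit : cexp ((1 - u) * log c) = c * cexp (-u * log c) := by
    rw [sub_mul, one_mul, sub_eq_add_neg, Complex.exp_add, ← Complex.ofReal_exp, exp_log hc,
      neg_mul]
  have hu₀ : u ≠ 0 := Complex.ne_zero_of_re_pos (by linarith)
  have hu₁ : u - 1 ≠ 0 := by rw [sub_ne_zero]; rintro rfl; simp at hu
  have hu₁' : 1 - u ≠ 0 := by rw [← neg_sub]; exact neg_ne_zero.2 hu₁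
  rw [ofReal_cpow_eq_cexp_mul_log hc, hsplit]
  field_simp
  ring

lemma integral_norm_cexp_mul_max_exp_sub (hu : 1 < u.re) (hc : 0 < c) :
    ∫ x : ℝ, ‖cexp (-(u * x)) * (max (exp x - c) 0 : ℝ)‖ =
      c ^ (1 - u.re) / (u.re * (u.re - 1)) := by
  have hnorm (x : ℝ) : ((‖cexp (-(u * x)) * (max (exp x - c) 0 : ℝ)‖ : ℝ) : ℂ) =
      cexp (-(u.re * x)) * (max (exp x - c) 0 : ℝ) := by
    rw [norm_mul, Complex.norm_exp, Complex.norm_real, norm_of_nonneg (le_max_right _ _)]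
    push_cast
    simp
  apply Complex.ofReal_injective
  rw [← integral_complex_ofReal]
  simp_rw [hnorm]
  rw [integral_cexp_mul_max_exp_sub (by simpa using hu) hc]
  push_cast [Complex.ofReal_cpow hc.le]
  rfl

end Call

section Sigmoid

variable {E : Type*} [NormedAddCommGroup E] [NormedSpace ℝ E]

lemma abs_deriv_sigmoid (t : ℝ) : |sigmoid t * (1 - sigmoid t)| = sigmoid t * (1 - sigmoid t) :=
  abs_of_pos (mul_pos (sigmoid_pos t) (sub_pos.2 (sigmoid_lt_one t)))

lemma integrableOn_Ioo_zero_one_iff_integrable_comp_sigmoid (g : ℝ → E) :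
    IntegrableOn g (Ioo 0 1) ↔
      Integrable (fun t => (sigmoid t * (1 - sigmoid t)) • g (sigmoid t)) := by
  have := integrableOn_image_iff_integrableOn_abs_deriv_smul MeasurableSet.univ
    (fun t _ => (hasDerivAt_sigmoid t).hasDerivWithinAt) sigmoid_injective.injOn g
  simpa only [image_univ, range_sigmoid, abs_deriv_sigmoid, integrableOn_univ] using this

lemma integral_Ioo_zero_one_eq_integral_comp_sigmoid (g : ℝ → E) :
    ∫ w in Ioo 0 1, g w = ∫ t, (sigmoid t * (1 - sigmoid t)) • g (sigmoid t) := by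
  have := integral_image_eq_integral_abs_deriv_smul MeasurableSet.univ
    (fun t _ => (hasDerivAt_sigmoid t).hasDerivWithinAt) sigmoid_injective.injOn g
  simpa only [image_univ, range_sigmoid, abs_deriv_sigmoid, setIntegral_univ] using this

end Sigmoid

lemma sigmoid_eq_exp_div (t : ℝ) : sigmoid t = exp t / (1 + exp t) := by
  rw [sigmoid_def, exp_neg]
  field_simp
  ring

lemma one_sub_sigmoid (t : ℝ) : 1 - sigmoid t = (1 + exp t)⁻¹ := by
  rw [← sigmoid_neg, sigmoid_def, neg_neg]

lemma smul_beta_integrand {x : ℝ} (hx₀ : 0 < x) (hx₁ : x < 1) (a b : ℂ) :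
    (x * (1 - x)) • ((x : ℂ) ^ (a - 1) * (1 - (x : ℂ)) ^ (b - 1)) =
      (x : ℂ) ^ a * (1 - (x : ℂ)) ^ b := by
  have hx : (x : ℂ) ≠ 0 := by exact_mod_cast hx₀.ne'
  have hx' : 1 - (x : ℂ) ≠ 0 := by rw [sub_ne_zero]; exact_mod_cast hx₁.ne'
  rw [Complex.cpow_sub _ _ hx, Complex.cpow_sub _ _ hx', Complex.cpow_one, Complex.cpow_one,
    Complex.real_smul]
  push_cast
  field_simp

lemma integrable_sigmoid_cpow_mul_one_sub_sigmoid_cpow {a b : ℂ} (ha : 0 < a.re)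
    (hb : 0 < b.re) :
    Integrable (fun t : ℝ => (sigmoid t : ℂ) ^ a * (1 - (sigmoid t : ℂ)) ^ b) := by
  have hbeta := Complex.betaIntegral_convergent ha hb
  rw [intervalIntegrable_iff_integrableOn_Ioo_of_le zero_le_one,
    integrableOn_Ioo_zero_one_iff_integrable_comp_sigmoid] at hbeta
  exact hbeta.congr (Eventually.of_forall fun t =>
    smul_beta_integrand (sigmoid_pos t) (sigmoid_lt_one t) a b)

lemma integral_sigmoid_cpow_mul_one_sub_sigmoid_cpow (a b : ℂ) :
    ∫ t : ℝ, (sigmoid t : ℂ) ^ a * (1 - (sigmoid t : ℂ)) ^ b = Complex.betaIntegral a b := by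
  rw [Complex.betaIntegral, intervalIntegral.integral_of_le zero_le_one,
    integral_Ioc_eq_integral_Ioo, integral_Ioo_zero_one_eq_integral_comp_sigmoid]
  exact integral_congr_ae (Eventually.of_forall fun t =>
    (smul_beta_integrand (sigmoid_pos t) (sigmoid_lt_one t) a b).symm)

lemma sigmoid_cpow_mul_one_sub_sigmoid_cpow (a b : ℂ) (t : ℝ) :
    (sigmoid t : ℂ) ^ a * (1 - (sigmoid t : ℂ)) ^ b =
      cexp (a * t) * ((1 + exp t : ℝ) : ℂ) ^ (-(a + b)) := by
  have hpos : 0 < 1 + exp t := by positivity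
  rw [← Complex.ofReal_one, ← Complex.ofReal_sub, one_sub_sigmoid, sigmoid_eq_exp_div,
    ofReal_cpow_eq_cexp_mul_log (div_pos (exp_pos t) hpos),
    ofReal_cpow_eq_cexp_mul_log (inv_pos.2 hpos), ofReal_cpow_eq_cexp_mul_log hpos,
    ← Complex.exp_add, ← Complex.exp_add, log_div (exp_pos t).ne' hpos.ne', log_exp, log_inv]
  push_cast
  ring_nf

lemma sigmoid_cpow_neg_mul_one_sub_sigmoid_cpow (u v : ℂ) (t : ℝ) :
    (sigmoid t : ℂ) ^ (-v) * (1 - (sigmoid t : ℂ)) ^ (u + v - 1) =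
      cexp (-(v * t)) * ((exp t + 1 : ℝ) : ℂ) ^ (1 - u) := by
  rw [sigmoid_cpow_mul_one_sub_sigmoid_cpow, add_comm (exp t)]
  ring_nf

section ShiftedPower

variable {u v : ℂ} {K : ℝ}

lemma cexp_mul_exp_add_cpow_add_log (hK : 0 < K) (u v : ℂ) (t : ℝ) :
    cexp (-(v * ↑(t + log K))) * ((exp (t + log K) + K : ℝ) : ℂ) ^ (1 - u) =
      (K : ℂ) ^ (1 - u - v) * (cexp (-(v * t)) * ((exp t + 1 : ℝ) : ℂ) ^ (1 - u)) := by
  have hK' : (K : ℂ) ≠ 0 := by exact_mod_cast hK.ne'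
  rw [exp_add, exp_log hK, show exp t * K + K = K * (exp t + 1) by ring, Complex.ofReal_mul,
    Complex.mul_cpow_ofReal_nonneg hK.le (by positivity), show 1 - u - v = -v + (1 - u) by ring,
    Complex.cpow_add _ _ hK', ofReal_cpow_eq_cexp_mul_log hK (-v)]
  push_cast
  rw [mul_add, neg_add, Complex.exp_add]
  ring_nf

lemma integrable_cexp_mul_exp_add_cpow (hv : v.re < 0) (huv : 1 < u.re + v.re) (hK : 0 < K) :
    Integrable (fun y : ℝ => cexp (-(v * y)) * ((exp y + K : ℝ) : ℂ) ^ (1 - u)) := by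
  have hsig := (integrable_sigmoid_cpow_mul_one_sub_sigmoid_cpow (a := -v) (b := u + v - 1)
    (by simpa using hv) (by simp; linarith)).const_mul ((K : ℂ) ^ (1 - u - v))
  simp_rw [sigmoid_cpow_neg_mul_one_sub_sigmoid_cpow, ← cexp_mul_exp_add_cpow_add_log hK] at hsig
  simpa using hsig.comp_sub_right (log K)

lemma integral_cexp_mul_exp_add_cpow (hK : 0 < K) (u v : ℂ) :
    ∫ y : ℝ, cexp (-(v * y)) * ((exp y + K : ℝ) : ℂ) ^ (1 - u) =
      (K : ℂ) ^ (1 - u - v) * Complex.betaIntegral (-v) (u + v - 1) := by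
  rw [← integral_add_right_eq_self _ (log K)]
  simp_rw [cexp_mul_exp_add_cpow_add_log hK, ← sigmoid_cpow_neg_mul_one_sub_sigmoid_cpow]
  rw [integral_const_mul, integral_sigmoid_cpow_mul_one_sub_sigmoid_cpow]

end ShiftedPower

lemma Complex.Gamma_add_one_eq_mul_mul_Gamma_sub_one {s : ℂ} (hs₀ : s ≠ 0) (hs₁ : s - 1 ≠ 0) :
    Complex.Gamma (s + 1) = s * (s - 1) * Complex.Gamma (s - 1) := by
  rw [Complex.Gamma_add_one s hs₀, mul_assoc, ← Complex.Gamma_add_one _ hs₁, sub_add_cancel]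

lemma spread_integrand_eq (u₁ u₂ : ℂ) (K : ℝ) (x : ℝ × ℝ) :
    cexp (-(u₁ * x.1 + u₂ * x.2)) * (max (exp x.1 - exp x.2 - K) 0 : ℝ) =
      cexp (-(u₂ * x.2)) * (cexp (-(u₁ * x.1)) * (max (exp x.1 - (exp x.2 + K)) 0 : ℝ)) := by
  rw [sub_sub, ← mul_assoc, ← Complex.exp_add, neg_add, add_comm]

lemma integrable_spread_integrand {u₁ u₂ : ℂ} {K : ℝ} (hK : 0 < K) (h₂ : u₂.re < 0)
    (h₁₂ : 1 < u₁.re + u₂.re) :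
    Integrable (fun x : ℝ × ℝ =>
      cexp (-(u₁ * x.1 + u₂ * x.2)) * (max (exp x.1 - exp x.2 - K) 0 : ℝ)) := by
  have hu₁ : 1 < u₁.re := by linarith
  have hc (y : ℝ) : 0 < exp y + K := by positivity
  have hinner (y : ℝ) :
      ∫ x : ℝ, ‖cexp (-(u₁ * x + u₂ * y)) * (max (exp x - exp y - K) 0 : ℝ)‖ =
        ‖cexp (-(u₂ * y)) * ((exp y + K : ℝ) : ℂ) ^ (1 - u₁)‖ / (u₁.re * (u₁.re - 1)) := by
    simp only [spread_integrand_eq u₁ u₂ K (_, y), norm_mul (cexp (-(u₂ * y)))]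
    rw [integral_const_mul, integral_norm_cexp_mul_max_exp_sub hu₁ (hc y),
      Complex.norm_cpow_eq_rpow_re_of_pos (hc y)]
    simp only [Complex.sub_re, Complex.one_re]
    ring
  rw [Measure.volume_eq_prod, integrable_prod_iff' (by fun_prop)]
  refine ⟨Eventually.of_forall fun y => ?_, ?_⟩
  · simp only [spread_integrand_eq u₁ u₂ K (_, y)]
    exact (integrable_cexp_mul_max_exp_sub hu₁ (hc y)).const_mul _
  · simp only [hinner]
    exact (integrable_cexp_mul_exp_add_cpow h₂ h₁₂ hK).norm.div_const _

/-- **Bilateral Laplace transform of the two-asset spread option payoff.** For `K > 0`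
and `u₁, u₂ ∈ ℂ` with `Re(u₂) < 0` and `Re(u₁) + Re(u₂) > 1`, the transform converges
absolutely and
`∫_{ℝ²} e^{−u₁x₁−u₂x₂} (e^{x₁} − e^{x₂} − K)⁺ dx = K^{1−u₁−u₂} Γ(u₁+u₂−1) Γ(−u₂) / Γ(u₁+1)`. -/
theorem laplace_transform_spread (K : ℝ) (hK : 0 < K) (u₁ u₂ : ℂ)
    (h₂ : u₂.re < 0) (h₁₂ : 1 < u₁.re + u₂.re) :
    Integrable (fun x : ℝ × ℝ =>
      Complex.exp (-(u₁ * x.1 + u₂ * x.2)) * (max (Real.exp x.1 - Real.exp x.2 - K) 0 : ℝ)) ∧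
    ∫ x : ℝ × ℝ,
        Complex.exp (-(u₁ * x.1 + u₂ * x.2)) * (max (Real.exp x.1 - Real.exp x.2 - K) 0 : ℝ)
      = (K : ℂ) ^ (1 - u₁ - u₂) * Complex.Gamma (u₁ + u₂ - 1) * Complex.Gamma (-u₂)
          / Complex.Gamma (u₁ + 1) := by
  have hu₁ : 1 < u₁.re := by linarith
  have hc (y : ℝ) : 0 < exp y + K := by positivity
  have hint := integrable_spread_integrand hK h₂ h₁₂
  refine ⟨hint, ?_⟩
  rw [Measure.volume_eq_prod] at hint ⊢
  rw [integral_prod_symm _ hint]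
  simp only [spread_integrand_eq u₁ u₂ K (_, _), integral_const_mul,
    integral_cexp_mul_max_exp_sub hu₁ (hc _), mul_div_assoc']
  rw [integral_div, integral_cexp_mul_exp_add_cpow hK,
    Complex.betaIntegral_eq_Gamma_mul_div _ _ (by simpa using h₂) (by simp; linarith),
    show -u₂ + (u₁ + u₂ - 1) = u₁ - 1 by ring,
    Complex.Gamma_add_one_eq_mul_mul_Gamma_sub_one (Complex.ne_zero_of_re_pos (by linarith))
      (Complex.ne_zero_of_re_pos (by simp; linarith))]
  have hΓ : Complex.Gamma (u₁ - 1) ≠ 0 := Complex.Gamma_ne_zero_of_re_pos (by simp; linarith)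
  field_simp
end

section
/- Let M ≥ 1, K > 0 real, and u₁, …, u_M ∈ ℂ with Re(u_m) > 0 for every m and Σ_{m=1}^M Re(u_m) > 1. Then the bilateral Laplace transform of the worst-of call payoff converges absolutely and ∫_{ℝ^M} e^{−Σ_m u_m x_m}·(min_{1≤m≤M} e^{x_m} − K)⁺ dx = K^{1−Σ_m u_m} / ( (Σ_m u_m − 1)·∏_{m=1}^M u_m ). -/
/-!
Layer cake: `(b - K)⁺ = ∫_K^∞ 1{y < b} dy`, and for `y > 0` we have `y < min_m e^{x_m}` iff
`x_m > log y` for every `m`. So the integrand is `∫_K^∞ ∏_m 1{x_m > log y} e^{-u_m x_m} dy`, whose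
inner integrand factors over the coordinates. Integrating in `x` first gives `∏_m y^{-u_m}/u_m`, and
`∫_K^∞ y^{-Σu} dy = K^{1-Σu}/(Σu - 1)`. The same computation with `Re u_m` in place of `u_m`
bounds the integral of the absolute value and justifies Fubini.
-/

open MeasureTheory Set
open scoped Real Complex

theorem lt_ciInf_iff_of_finite {ι α : Type*} [ConditionallyCompleteLinearOrder α] [Finite ι]
    [Nonempty ι] {f : ι → α} {a : α} : a < ⨅ i, f i ↔ ∀ i, a < f i := by
  refine ⟨fun h i => h.trans_le (ciInf_le (Set.finite_range f).bddBelow i), fun h => ?_⟩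
  obtain ⟨i, hi⟩ := exists_eq_ciInf_of_finite (f := f)
  exact hi ▸ h i

theorem setIntegral_Ioi_indicator_Iio_one (b K : ℝ) :
    ∫ y in Ioi K, (Iio b).indicator (1 : ℝ → ℂ) y = (max (b - K) 0 : ℝ) := by
  rw [setIntegral_indicator measurableSet_Iio, Ioi_inter_Iio, Pi.one_def, setIntegral_const,
    Real.volume_real_Ioo, Complex.real_smul, mul_one]

theorem setIntegral_Ioi_cpow_neg {s : ℂ} (hs : 1 < s.re) {K : ℝ} (hK : 0 < K) :
    ∫ y in Ioi K, (y : ℂ) ^ (-s) = (K : ℂ) ^ (1 - s) / (s - 1) := by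
  rw [integral_Ioi_cpow_of_lt (by simpa using hs) hK, neg_add_eq_sub, neg_div, ← div_neg, neg_sub]

section ProductOfHalfLines

variable {ι : Type*} [Fintype ι]

theorem integral_prod_indicator_Ioi {𝕜 : Type*} [RCLike 𝕜] (f : ι → ℝ → 𝕜) (a : ℝ) :
    ∫ x : ι → ℝ, ∏ i, (Ioi a).indicator (f i) (x i) = ∏ i, ∫ t in Ioi a, f i t := by
  rw [integral_fintype_prod_volume_eq_prod (f := fun i => (Ioi a).indicator (f i))]
  simp_rw [integral_indicator measurableSet_Ioi]

theorem integral_prod_indicator_Ioi_cexp {u : ι → ℂ} (hu : ∀ i, 0 < (u i).re) (a : ℝ) :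
    ∫ x : ι → ℝ, ∏ i, (Ioi a).indicator (fun t : ℝ => cexp (-u i * t)) (x i)
      = cexp (-(∑ i, u i) * a) / ∏ i, u i := by
  rw [integral_prod_indicator_Ioi, neg_mul, Finset.sum_mul, ← Finset.sum_neg_distrib,
    Complex.exp_sum, ← Finset.prod_div_distrib]
  refine Finset.prod_congr rfl fun i _ => ?_
  rw [integral_exp_mul_complex_Ioi (by simpa using hu i), neg_div_neg_eq, neg_mul]

theorem integral_prod_indicator_Ioi_rexp {b : ι → ℝ} (hb : ∀ i, 0 < b i) (a : ℝ) :
    ∫ x : ι → ℝ, ∏ i, (Ioi a).indicator (fun t : ℝ => rexp (-b i * t)) (x i)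
      = rexp (-(∑ i, b i) * a) / ∏ i, b i := by
  rw [integral_prod_indicator_Ioi, neg_mul, Finset.sum_mul, ← Finset.sum_neg_distrib,
    Real.exp_sum, ← Finset.prod_div_distrib]
  refine Finset.prod_congr rfl fun i _ => ?_
  rw [integral_exp_mul_Ioi (by simpa using hb i), neg_div_neg_eq, neg_mul]

end ProductOfHalfLines

section Kernel

variable {ι : Type*} [Fintype ι] (u : ι → ℂ)

noncomputable def worstOfCallKernel (x : ι → ℝ) (y : ℝ) : ℂ :=
  ∏ i, (Ioi (Real.log y)).indicator (fun t : ℝ => cexp (-u i * t)) (x i)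

theorem measurable_worstOfCallKernel : Measurable (Function.uncurry (worstOfCallKernel u)) := by
  refine Finset.measurable_prod _ fun i _ => ?_
  simp only [indicator_apply, mem_Ioi]
  exact Measurable.ite (measurableSet_lt (by fun_prop) (by fun_prop)) (by fun_prop) measurable_const

theorem norm_worstOfCallKernel (x : ι → ℝ) (y : ℝ) :
    ‖worstOfCallKernel u x y‖
      = ∏ i, (Ioi (Real.log y)).indicator (fun t : ℝ => rexp (-(u i).re * t)) (x i) := by
  simp only [worstOfCallKernel, norm_prod, norm_indicator_eq_indicator_norm, Complex.norm_exp,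
    Complex.mul_re, Complex.neg_re, Complex.ofReal_re, Complex.neg_im, Complex.ofReal_im,
    mul_zero, sub_zero]

variable {u}

theorem integral_worstOfCallKernel (hu : ∀ i, 0 < (u i).re) {y : ℝ} (hy : 0 < y) :
    ∫ x, worstOfCallKernel u x y = (y : ℂ) ^ (-∑ i, u i) / ∏ i, u i := by
  unfold worstOfCallKernel
  rw [integral_prod_indicator_Ioi_cexp hu,
    Complex.cpow_def_of_ne_zero (by exact_mod_cast hy.ne'), ← Complex.ofReal_log hy.le, mul_comm]

theorem integral_norm_worstOfCallKernel (hu : ∀ i, 0 < (u i).re) {y : ℝ} (hy : 0 < y) :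
    ∫ x, ‖worstOfCallKernel u x y‖ = y ^ (-∑ i, (u i).re) / ∏ i, (u i).re := by
  simp_rw [norm_worstOfCallKernel]
  rw [integral_prod_indicator_Ioi_rexp hu, Real.rpow_def_of_pos hy, mul_comm]

theorem integrable_worstOfCallKernel (hu : ∀ i, 0 < (u i).re) (hs : 1 < ∑ i, (u i).re)
    {K : ℝ} (hK : 0 < K) :
    Integrable (Function.uncurry (worstOfCallKernel u))
      (volume.prod (volume.restrict (Ioi K))) := by
  rw [integrable_prod_iff' (measurable_worstOfCallKernel u).aestronglyMeasurable]
  refine ⟨ae_of_all _ fun y => ?_, ?_⟩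
  · exact Integrable.fintype_prod
      (f := fun i => (Ioi (Real.log y)).indicator fun t : ℝ => cexp (-u i * t)) fun i =>
        (integrable_indicator_iff measurableSet_Ioi).2
          (integrableOn_exp_mul_complex_Ioi (by simpa using hu i) _)
  · refine IntegrableOn.congr_fun ((integrableOn_Ioi_rpow_of_lt (a := -∑ i, (u i).re)
      (by linarith) hK).div_const (∏ i, (u i).re)) (fun y hy => ?_) measurableSet_Ioi
    exact (integral_norm_worstOfCallKernel hu (hK.trans hy)).symm

theorem worstOfCallKernel_eq_indicator [Nonempty ι] (x : ι → ℝ) {y : ℝ} (hy : 0 < y) :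
    worstOfCallKernel u x y
      = cexp (-∑ i, u i * x i) * (Iio (⨅ i, rexp (x i))).indicator 1 y := by
  classical
  have hlt : y < ⨅ i, rexp (x i) ↔ ∀ i, Real.log y < x i := by
    simp only [lt_ciInf_iff_of_finite, Real.log_lt_iff_lt_exp hy]
  simp only [worstOfCallKernel, indicator_apply, mem_Ioi, mem_Iio, Fintype.prod_ite_zero, hlt,
    Pi.one_apply, mul_ite, mul_one, mul_zero, ← Complex.exp_sum, ← Finset.sum_neg_distrib, neg_mul]

theorem setIntegral_worstOfCallKernel [Nonempty ι] (x : ι → ℝ) {K : ℝ} (hK : 0 < K) :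
    ∫ y in Ioi K, worstOfCallKernel u x y
      = cexp (-∑ i, u i * x i) * (max ((⨅ i, rexp (x i)) - K) 0 : ℝ) := by
  rw [setIntegral_congr_fun measurableSet_Ioi
    fun y hy => worstOfCallKernel_eq_indicator x (hK.trans hy), integral_const_mul,
    setIntegral_Ioi_indicator_Iio_one]

end Kernel

/-- **Bilateral Laplace transform of the worst-of call payoff.** For `K > 0` and
`u ∈ ℂ^M` with `Re(u_m) > 0` for all `m` and `Σ_m Re(u_m) > 1`, the transform
converges absolutely and
`∫_{ℝ^M} e^{−Σ u_m x_m} (min_m e^{x_m} − K)⁺ dx = K^{1−Σu} / ((Σu − 1) ∏ u_m)`. -/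
theorem laplace_transform_worst_of_call (M : ℕ) (hM : 1 ≤ M)
    (K : ℝ) (hK : 0 < K) (u : Fin M → ℂ)
    (hre : ∀ m, 0 < (u m).re) (hsum : 1 < ∑ m, (u m).re) :
    Integrable (fun x : Fin M → ℝ =>
      Complex.exp (-∑ m, u m * x m) * (max ((⨅ m, Real.exp (x m)) - K) 0 : ℝ)) ∧
    ∫ x : Fin M → ℝ,
        Complex.exp (-∑ m, u m * x m) * (max ((⨅ m, Real.exp (x m)) - K) 0 : ℝ)
      = (K : ℂ) ^ (1 - ∑ m, u m) / ((∑ m, u m - 1) * ∏ m, u m) := by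
  have : Nonempty (Fin M) := ⟨⟨0, hM⟩⟩
  have hint := integrable_worstOfCallKernel hre hsum hK
  simp_rw [← setIntegral_worstOfCallKernel _ hK]
  refine ⟨hint.integral_prod_left, ?_⟩
  rw [integral_integral_swap hint, setIntegral_congr_fun measurableSet_Ioi
    fun y hy => integral_worstOfCallKernel hre (hK.trans hy), integral_div,
    setIntegral_Ioi_cpow_neg (by rwa [Complex.re_sum]) hK, div_div]
end

section
/- Let M ≥ 1, K > 0 real, and u₁, …, u_M ∈ ℂ with Re(u_m) < 0 for every m. Then the bilateral Laplace transform of the put-on-the-sum payoff converges absolutely and ∫_{ℝ^M} e^{−Σ_m u_m x_m}·(K − Σ_{m=1}^M e^{x_m})⁺ dx = K^{1−Σ_m u_m} · ∏_{m=1}^M Γ(−u_m) / Γ(2 − Σ_{m=1}^M u_m). -/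
/-!
Raise the payoff to a complex power `s` and integrate out one coordinate at a time. In the
first coordinate the substitution `y = e^t` turns the integral into the Mellin transform of
`y ↦ (c - y)⁺ ^ s` at `-u₀`, where `c = K - ∑_{m ≥ 1} e^{x_m}`; by the scaled Beta integral this
is `B(-u₀, s + 1) · c⁺ ^ (s - u₀)`, i.e. the same integrand in one dimension fewer with exponent
`s - u₀`. Induction on `M` gives `K^(s - ∑u) Γ(s + 1) ∏ Γ(-u_m) / Γ(s + 1 - ∑u)`, and `s = 1` is
the theorem. Absolute convergence is proved along the same induction: the modulus of the
integrand is the integrand for `Re u` and `Re s`.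
-/

open MeasureTheory Set Complex

section InsertNth

variable {α E : Type*} [MeasureSpace α] [SigmaFinite (volume : Measure α)]
  [NormedAddCommGroup E] {n : ℕ} {f : (Fin (n + 1) → α) → E}

lemma integrable_of_integrable_insertNth (i : Fin (n + 1)) (hf : AEStronglyMeasurable f)
    (hfib : ∀ y, Integrable fun t => f (i.insertNth t y))
    (hnorm : Integrable fun y => ∫ t, ‖f (i.insertNth t y)‖) : Integrable f := by
  have e := volume_preserving_piFinSuccAbove (fun _ : Fin (n + 1) => α) i
  rw [← e.symm.integrable_comp_emb (MeasurableEquiv.measurableEmbedding _)]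
  exact (integrable_prod_iff' (hf.comp_measurePreserving e.symm)).2 ⟨.of_forall hfib, hnorm⟩

lemma integral_eq_integral_insertNth [NormedSpace ℝ E] (i : Fin (n + 1)) (hf : Integrable f) :
    ∫ x, f x = ∫ y, ∫ t, f (i.insertNth t y) := by
  have e := (volume_preserving_piFinSuccAbove (fun _ : Fin (n + 1) => α) i).symm
  rw [← e.integral_comp' f]
  exact integral_prod_symm _ ((e.integrable_comp_emb (MeasurableEquiv.measurableEmbedding _)).2 hf)

end InsertNth

lemma ofReal_exp_cpow (t : ℝ) (a : ℂ) : (Real.exp t : ℂ) ^ a = cexp (a * t) := by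
  rw [cpow_def_of_ne_zero (ofReal_ne_zero.2 (Real.exp_pos t).ne'),
    ← ofReal_log (Real.exp_pos t).le, Real.log_exp, mul_comm]

section ExpSubstitution

variable (u : ℂ) (g : ℝ → ℂ)

lemma abs_exp_smul_cpow_smul_comp_exp (t : ℝ) :
    |Real.exp t| • ((Real.exp t : ℂ) ^ (-u - 1) • g (Real.exp t))
      = cexp (-(u * t)) * g (Real.exp t) := by
  rw [abs_of_pos (Real.exp_pos t), real_smul, smul_eq_mul, ofReal_exp_cpow, ofReal_exp,
    ← mul_assoc, ← Complex.exp_add]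
  ring_nf

lemma integrable_cexp_mul_comp_exp_iff :
    Integrable (fun t : ℝ => cexp (-(u * t)) * g (Real.exp t)) ↔ MellinConvergent g (-u) := by
  rw [MellinConvergent, ← Real.range_exp, ← image_univ,
    integrableOn_image_iff_integrableOn_abs_deriv_smul MeasurableSet.univ
      (fun t _ => (Real.hasDerivAt_exp t).hasDerivWithinAt) Real.exp_injective.injOn,
    integrableOn_univ]
  simp_rw [abs_exp_smul_cpow_smul_comp_exp]

lemma integral_cexp_mul_comp_exp :
    ∫ t : ℝ, cexp (-(u * t)) * g (Real.exp t) = mellin g (-u) := by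
  rw [mellin, ← Real.range_exp, ← image_univ,
    integral_image_eq_integral_abs_deriv_smul MeasurableSet.univ
      (fun t _ => (Real.hasDerivAt_exp t).hasDerivWithinAt) Real.exp_injective.injOn,
    setIntegral_univ]
  simp_rw [abs_exp_smul_cpow_smul_comp_exp]

end ExpSubstitution

lemma hasMellin_of_continuousOn_of_eqOn_Ioi {f : ℝ → ℂ} {c : ℝ} (hc : 0 ≤ c) {a : ℂ}
    (ha : 0 < a.re) (hf : ContinuousOn f (Icc 0 c)) (hzero : EqOn f 0 (Ioi c)) :
    HasMellin f a (∫ y in 0..c, (y : ℂ) ^ (a - 1) * f y) := by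
  have hint : IntervalIntegrable (fun y : ℝ => (y : ℂ) ^ (a - 1) * f y) volume 0 c := by
    refine (intervalIntegral.intervalIntegrable_cpow' ?_).mul_continuousOn ?_
    · simpa using ha
    · rwa [uIcc_of_le hc]
  have hvanish : ∀ y ∈ Ioi 0 \ Ioc 0 c, (y : ℂ) ^ (a - 1) • f y = 0 := fun y hy => by
    rw [hzero (not_le.mp fun h => hy.2 ⟨hy.1, h⟩), Pi.zero_apply, smul_zero]
  refine ⟨?_, ?_⟩
  · exact ((intervalIntegrable_iff_integrableOn_Ioc_of_le hc).1 hint).of_forall_sdiff_eq_zero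
      measurableSet_Ioi hvanish
  · rw [mellin, intervalIntegral.integral_of_le hc,
      setIntegral_eq_of_subset_of_forall_sdiff_eq_zero measurableSet_Ioi Ioc_subset_Ioi_self
        hvanish]
    rfl

lemma hasMellin_max_sub_cpow (c : ℝ) {a s : ℂ} (ha : 0 < a.re) (hs : 0 < s.re) :
    HasMellin (fun y : ℝ => ((max (c - y) 0 : ℝ) : ℂ) ^ s) a
      (((max c 0 : ℝ) : ℂ) ^ (a + s) * betaIntegral a (s + 1)) := by
  have hs0 : s ≠ 0 := fun h => by simp [h] at hs
  have hcont : Continuous fun y : ℝ => ((max (c - y) 0 : ℝ) : ℂ) ^ s :=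
    (continuous_ofReal_cpow_const hs).comp (by fun_prop)
  have hzero : EqOn (fun y : ℝ => ((max (c - y) 0 : ℝ) : ℂ) ^ s) 0 (Ioi (max c 0)) :=
    fun y hy => by
      simp [max_eq_right (by linarith [le_max_left c 0, mem_Ioi.mp hy] : c - y ≤ 0), zero_cpow hs0]
  convert hasMellin_of_continuousOn_of_eqOn_Ioi (le_max_right c 0) ha hcont.continuousOn hzero
    using 1
  rcases le_or_gt c 0 with hc | hc
  · have has0 : a + s ≠ 0 := fun h => by
      have := congrArg re h; simp only [add_re, zero_re] at this; linarith
    rw [max_eq_right hc, ofReal_zero, zero_cpow has0, zero_mul, intervalIntegral.integral_same]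
  · rw [max_eq_left hc.le, show a + s = a + (s + 1) - 1 by ring, ← betaIntegral_scaled _ _ hc,
      add_sub_cancel_right]
    refine intervalIntegral.integral_congr fun y hy => ?_
    rw [uIcc_of_le hc.le] at hy
    simp [max_eq_left (sub_nonneg.2 hy.2)]

noncomputable def putIntegrand {M : ℕ} (K : ℝ) (u : Fin M → ℂ) (s : ℂ) (x : Fin M → ℝ) : ℂ :=
  cexp (-∑ m, u m * x m) * ((max (K - ∑ m, Real.exp (x m)) 0 : ℝ) : ℂ) ^ s

section PutIntegrand

variable (K : ℝ) {M : ℕ}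

lemma continuous_putIntegrand (u : Fin M → ℂ) {s : ℂ} (hs : 0 < s.re) :
    Continuous (putIntegrand K u s) :=
  (by fun_prop : Continuous fun x : Fin M → ℝ => cexp (-∑ m, u m * x m)).mul
    ((continuous_ofReal_cpow_const hs).comp (by fun_prop))

lemma norm_putIntegrand (u : Fin M → ℂ) {s : ℂ} (hs : 0 < s.re) (x : Fin M → ℝ) :
    ‖putIntegrand K u s x‖ = (putIntegrand K (fun m => ((u m).re : ℂ)) (s.re : ℂ) x).re := by
  have hpayoff := le_max_right (K - ∑ m, Real.exp (x m)) 0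
  have hexp : cexp (-∑ m, ((u m).re : ℂ) * x m) = (Real.exp (-∑ m, (u m).re * x m) : ℝ) := by
    push_cast; rfl
  rw [putIntegrand, putIntegrand, norm_mul, norm_exp,
    norm_cpow_eq_rpow_re_of_nonneg hpayoff hs.ne', ← ofReal_cpow hpayoff, hexp, ← ofReal_mul,
    ofReal_re]
  simp [mul_re]

lemma putIntegrand_cons (u : Fin (M + 1) → ℂ) (s : ℂ) (t : ℝ) (y : Fin M → ℝ) :
    putIntegrand K u s (Fin.cons t y) = cexp (-∑ j, Fin.tail u j * y j) *
      (cexp (-(u 0 * t)) * ((max ((K - ∑ j, Real.exp (y j)) - Real.exp t) 0 : ℝ) : ℂ) ^ s) := by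
  simp only [putIntegrand, Fin.sum_univ_succ, Fin.cons_zero, Fin.cons_succ, Fin.tail, neg_add,
    Complex.exp_add, sub_sub, add_comm (Real.exp t)]
  ring

lemma integrable_putIntegrand_cons {u : Fin (M + 1) → ℂ} (hu : (u 0).re < 0) {s : ℂ}
    (hs : 0 < s.re) (y : Fin M → ℝ) : Integrable fun t => putIntegrand K u s (Fin.cons t y) := by
  simp_rw [putIntegrand_cons]
  exact ((integrable_cexp_mul_comp_exp_iff (u 0) _).2
    (hasMellin_max_sub_cpow _ (by simpa using hu) hs).1).const_mul _

lemma integral_putIntegrand_cons {u : Fin (M + 1) → ℂ} (hu : (u 0).re < 0) {s : ℂ}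
    (hs : 0 < s.re) (y : Fin M → ℝ) : ∫ t, putIntegrand K u s (Fin.cons t y)
      = betaIntegral (-u 0) (s + 1) * putIntegrand K (Fin.tail u) (s - u 0) y := by
  simp_rw [putIntegrand_cons, integral_const_mul]
  rw [integral_cexp_mul_comp_exp (u 0) fun y' => ((max (_ - y') 0 : ℝ) : ℂ) ^ s]
  rw [(hasMellin_max_sub_cpow _ (by simpa using hu) hs).2, putIntegrand, neg_add_eq_sub]
  ring

theorem integrable_putIntegrand :
    ∀ {M : ℕ} {u : Fin M → ℂ}, (∀ m, (u m).re < 0) → ∀ {s : ℂ}, 0 < s.re →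
      Integrable (putIntegrand K u s)
  | 0, _, _, _, _ => .of_finite
  | M + 1, u, hu, s, hs => by
    set σ : Fin (M + 1) → ℂ := fun m => ((u m).re : ℂ)
    have hσ : ∀ m, (σ m).re < 0 := by simpa [σ] using hu
    have hτ : 0 < (s.re : ℂ).re := by simpa using hs
    have hnorm : (fun y => ∫ t, ‖putIntegrand K u s ((0 : Fin (M + 1)).insertNth t y)‖)
        = fun y => (betaIntegral (-σ 0) (s.re + 1)
            * putIntegrand K (Fin.tail σ) (s.re - σ 0) y).re := by
      ext y
      have hre := integral_re (integrable_putIntegrand_cons K (hσ 0) hτ y)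
      simp only [RCLike.re_to_complex] at hre
      simp_rw [Fin.insertNth_zero', norm_putIntegrand K u hs]
      rw [hre, integral_putIntegrand_cons K (hσ 0) hτ]
    refine integrable_of_integrable_insertNth 0
      (continuous_putIntegrand K u hs).aestronglyMeasurable (fun y => by
        simpa only [Fin.insertNth_zero'] using integrable_putIntegrand_cons K (hu 0) hs y) ?_
    rw [hnorm]
    refine ((integrable_putIntegrand (fun j => hσ j.succ) ?_).const_mul _).re
    simp only [sub_re, ofReal_re, σ]
    linarith [hu 0]

theorem integral_putIntegrand :
    ∀ {M : ℕ} {u : Fin M → ℂ}, (∀ m, (u m).re < 0) → ∀ {s : ℂ}, 0 < s.re →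
      ∫ x, putIntegrand K u s x = ((max K 0 : ℝ) : ℂ) ^ (s - ∑ m, u m)
        * (Gamma (s + 1) * ∏ m, Gamma (-u m)) / Gamma (s + 1 - ∑ m, u m)
  | 0, u, _, s, hs => by
    have hΓ : Gamma (s + 1) ≠ 0 :=
      Gamma_ne_zero_of_re_pos (by simp only [add_re, one_re]; linarith)
    rw [integral_unique]
    simp [putIntegrand, volume_pi, Measure.real, hΓ]
  | M + 1, u, hu, s, hs => by
    have hs1 : 0 < (s + 1).re := by simp only [add_re, one_re]; linarith
    have hs' : 0 < (s - u 0).re := by simp only [sub_re]; linarith [hu 0]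
    have hΓ : Gamma (-u 0 + (s + 1)) ≠ 0 :=
      Gamma_ne_zero_of_re_pos (by simp only [add_re, neg_re, one_re]; linarith [hu 0])
    rw [integral_eq_integral_insertNth 0 (integrable_putIntegrand K hu hs)]
    simp_rw [Fin.insertNth_zero', integral_putIntegrand_cons K (hu 0) hs, integral_const_mul]
    rw [integral_putIntegrand (u := Fin.tail u) (fun j => hu j.succ) hs',
      betaIntegral_eq_Gamma_mul_div _ _ (by simpa using hu 0) hs1, Fin.sum_univ_succ,
      Fin.prod_univ_succ]
    simp only [Fin.tail]
    field_simp
    ring_nf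

end PutIntegrand

theorem laplace_transform_put_on_sum_general (M : ℕ)
    (K : ℝ) (hK : 0 < K) (u : Fin M → ℂ)
    (hre : ∀ m, (u m).re < 0) :
    Integrable (fun x : Fin M → ℝ =>
      Complex.exp (-∑ m, u m * x m) * (max (K - ∑ m, Real.exp (x m)) 0 : ℝ)) ∧
    ∫ x : Fin M → ℝ,
        Complex.exp (-∑ m, u m * x m) * (max (K - ∑ m, Real.exp (x m)) 0 : ℝ)
      = (K : ℂ) ^ (1 - ∑ m, u m) * (∏ m, Complex.Gamma (-u m))
          / Complex.Gamma (2 - ∑ m, u m) := by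
  have hpayoff : putIntegrand K u 1 = fun x : Fin M → ℝ =>
      Complex.exp (-∑ m, u m * x m) * (max (K - ∑ m, Real.exp (x m)) 0 : ℝ) := by
    ext x
    rw [putIntegrand, cpow_one]
  rw [← hpayoff]
  refine ⟨integrable_putIntegrand K hre one_pos, ?_⟩
  rw [integral_putIntegrand K hre one_pos, max_eq_left hK.le, Gamma_add_one 1 one_ne_zero,
    Gamma_one, mul_one, one_mul, one_add_one_eq_two]

/-- **Bilateral Laplace transform of the put-on-the-sum payoff.** For `K > 0` and
`u ∈ ℂ^M` with `Re(u_m) < 0` for all `m`, the transform converges absolutely and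
`∫_{ℝ^M} e^{−Σ u_m x_m} (K − Σ_m e^{x_m})⁺ dx = K^{1−Σu} ∏ Γ(−u_m) / Γ(2 − Σu)`. -/
theorem laplace_transform_put_on_sum (M : ℕ) (hM : 1 ≤ M)
    (K : ℝ) (hK : 0 < K) (u : Fin M → ℂ)
    (hre : ∀ m, (u m).re < 0) :
    Integrable (fun x : Fin M → ℝ =>
      Complex.exp (-∑ m, u m * x m) * (max (K - ∑ m, Real.exp (x m)) 0 : ℝ)) ∧
    ∫ x : Fin M → ℝ,
        Complex.exp (-∑ m, u m * x m) * (max (K - ∑ m, Real.exp (x m)) 0 : ℝ)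
      = (K : ℂ) ^ (1 - ∑ m, u m) * (∏ m, Complex.Gamma (-u m))
          / Complex.Gamma (2 - ∑ m, u m) :=
  laplace_transform_put_on_sum_general M K hK u hre
end
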